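/- arXiv:1610.05979 — 4 statements merged into one kernel-verified Lean document; each statement's English description precedes it below -/
import Mathlib

section
/- Let d ≥ 1 and let G_1,…,G_d be finite simple connected graphs with totally ordered vertex sets, and let 𝒢 = G_1×…×G_d. For every non-negative integer k, the graded piece Chow^{k+1}(𝒢) of the combinatorial Chow ring is generated as a ℤ-module by the classes of the monomials C_σ = C_{v_0}C_{v_1}⋯C_{v_k}, where σ ranges over the non-degenerate k-simplices of 𝒢 with vertices v_0 < v_1 < … < v_k. -/
open MvPolynomial

namespace ChowGS

variable {d : ℕ}

section General

variable (V : Fin d → Type) [∀ i, Fintype (V i)] [∀ i, LinearOrder (V i)]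
variable (G : ∀ i, SimpleGraph (V i))

/-- The vertex set of the product `𝒢 = G_1 × … × G_d`. -/
abbrev GV : Type := ∀ i, V i

/-- `u ≤ v` is a 1-simplex of the product. -/
def OneSimplex (u v : GV V) : Prop :=
  u ≤ v ∧ ∀ i, u i = v i ∨ (G i).Adj (u i) (v i)

/-- `I(u,v)`: the set of coordinates where `u` is strictly smaller than `v`. -/
def Iset (u v : GV V) : Finset (Fin d) :=
  Finset.univ.filter fun i => u i < v i

/-- A (possibly degenerate) `k`-simplex of the product. -/
def IsSimplexChain {k : ℕ} (σ : Fin (k + 1) → GV V) : Prop :=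
  Monotone σ ∧
  (∀ j : Fin k, OneSimplex V G (σ j.castSucc) (σ j.succ)) ∧
  ∀ j j' : Fin k, j ≠ j' →
    Disjoint (Iset V (σ j.castSucc) (σ j.succ)) (Iset V (σ j'.castSucc) (σ j'.succ))

/-- A list of vertices forms a simplex of `𝒢`. -/
def FormsSimplex (l : List (GV V)) : Prop :=
  ∃ (k : ℕ) (σ : Fin (k + 1) → GV V), IsSimplexChain V G σ ∧ l.Subperm (List.ofFn σ)

/-- The ideal of elements rationally equivalent to zero, generated by (R1), (R2), (R3). -/
noncomputable def Irat : Ideal (MvPolynomial (GV V) ℤ) :=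
  Ideal.span
    ({ p | ∃ l : List (GV V), ¬ FormsSimplex V G l ∧ p = (l.map X).prod } ∪
     { p | ∃ u : GV V, p = X u * ∑ v : GV V, X v } ∪
     { p | ∃ u w : GV V, ∃ i : Fin d, u i ≠ w i ∧
         p = X u * X w * ∑ v ∈ Finset.univ.filter (fun v : GV V => v i = u i), X v })

/-- The combinatorial Chow ring of the product of graphs. -/
abbrev Chow : Type := MvPolynomial (GV V) ℤ ⧸ Irat V G

noncomputable def mkChow : MvPolynomial (GV V) ℤ →ₐ[ℤ] Chow V G :=
  Ideal.Quotient.mkₐ ℤ (Irat V G)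

/-- The degree `n` graded piece of the Chow ring. -/
noncomputable def chowPiece (n : ℕ) : Submodule ℤ (Chow V G) :=
  Submodule.map (mkChow V G).toLinearMap (homogeneousSubmodule (GV V) ℤ n)

end General
end ChowGS

namespace ChowGS

section Nondeg

variable {d : ℕ}
variable (V : Fin d → Type) [∀ i, Fintype (V i)] [∀ i, LinearOrder (V i)]
variable (G : ∀ i, SimpleGraph (V i))

/-- A non-degenerate `k`-simplex of the product. -/
def IsNondegSimplex {k : ℕ} (σ : Fin (k + 1) → GV V) : Prop :=
  IsSimplexChain V G σ ∧ StrictMono σ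

/-- The monomial `C_σ = ∏_j C_{σ(j)}` attached to a simplex. -/
noncomputable def Cmon {k : ℕ} (σ : Fin (k + 1) → GV V) : MvPolynomial (GV V) ℤ :=
  ∏ j, MvPolynomial.X (σ j)

/-- The combinatorial cube `e_{u,v} = ∏_i {u_i, v_i}` spanned by a 1-simplex `u ≤ v`. -/
def cubeOf (u v : GV V) : Finset (GV V) :=
  Finset.univ.filter fun w => ∀ i, w i = u i ∨ w i = v i

/-- The element `R̃_{σ,i,j}` attached to a simplex `σ`, a position `t` and
indices `i, j ∈ I(σ_t, σ_{t+1})`. -/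
noncomputable def Rtilde {k : ℕ} (σ : Fin (k + 1) → GV V) (t : Fin k) (i j : Fin d) :
    MvPolynomial (GV V) ℤ :=
  (∑ w ∈ (cubeOf V (σ t.castSucc) (σ t.succ)).filter
      (fun w => w i = σ t.castSucc i), MvPolynomial.X w)
  - ∑ w ∈ (cubeOf V (σ t.castSucc) (σ t.succ)).filter
      (fun w => w j = σ t.castSucc j), MvPolynomial.X w

/-- `ℤ⟨𝒢_k^{nd}⟩`: the subgroup of `Z(𝒢)` generated by the monomials of
non-degenerate `k`-simplices. -/
noncomputable def Znd (k : ℕ) : Submodule ℤ (MvPolynomial (GV V) ℤ) :=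
  Submodule.span ℤ
    {p | ∃ σ : Fin (k + 1) → GV V, IsNondegSimplex V G σ ∧ p = Cmon V σ}

/-- `I_k^{nd}`: the subgroup of `ℤ⟨𝒢_k^{nd}⟩` generated by the elements
`C_σ · R̃_{σ,i,j}`. -/
noncomputable def Ind (k : ℕ) : Submodule ℤ (MvPolynomial (GV V) ℤ) :=
  Submodule.span ℤ
    {p | ∃ σ : Fin (k + 1) → GV V, IsNondegSimplex V G σ ∧
      ∃ (t : Fin k) (i j : Fin d),
        i ∈ Iset V (σ t.castSucc) (σ t.succ) ∧ j ∈ Iset V (σ t.castSucc) (σ t.succ) ∧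
        p = Cmon V σ * Rtilde V σ t i j}

end Nondeg
end ChowGS

/-!
A monomial of degree `k + 1` is `C_m = ∏_{v ∈ m} C_v` for a multiset `m` of `k + 1` vertices. If
`m` is not a simplex, `C_m` vanishes by (R1); if it is a simplex without repetitions, listing it
in lexicographic order (which extends the product order) gives a non-degenerate simplex. Otherwise
some vertex `u` is repeated, and (R2) or (R3), times the rest of the monomial, rewrites `C_m` as a
combination of monomials in which one copy of `u` is replaced by a vertex `v ≠ u` that is either
new or below `u`. Each such step lowers the pair (number of repetitions, sum of the heights
`#{y | y < v}`) lexicographically, so the rewriting terminates.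
-/

namespace MvPolynomial

variable {σ R : Type*} [CommSemiring R]

lemma prod_map_X_toMultiset (s : σ →₀ ℕ) :
    ((s.toMultiset.map X).prod : MvPolynomial σ R) = monomial s 1 := by
  rw [monomial_eq, C_1, one_mul, Finsupp.toMultiset_map, Finsupp.prod_toMultiset,
    Finsupp.prod_mapDomain_index] <;> simp [pow_add]

lemma isHomogeneous_prod_map_X (m : Multiset σ) :
    ((m.map X).prod : MvPolynomial σ R).IsHomogeneous (Multiset.card m) := by
  induction m using Multiset.induction_on with
  | empty => simpa using isHomogeneous_one σ R
  | cons a m ih => simpa [add_comm] using (isHomogeneous_X R a).mul ih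

lemma homogeneousSubmodule_eq_span_prod_map_X (n : ℕ) :
    homogeneousSubmodule σ R n =
      Submodule.span R {p | ∃ m : Multiset σ, Multiset.card m = n ∧ p = (m.map X).prod} := by
  refine le_antisymm ?_ (Submodule.span_le.mpr ?_)
  · rw [homogeneousSubmodule_eq_finsupp_supported, AddMonoidAlgebra.supported_eq_span_single,
      Submodule.span_le]
    rintro _ ⟨s, hs, rfl⟩
    refine Submodule.subset_span ⟨s.toMultiset, ?_, ?_⟩
    · simpa [Finsupp.degree_apply, Finsupp.sum] using hs
    · exact (single_eq_monomial s 1).trans (prod_map_X_toMultiset s).symm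
  · rintro _ ⟨m, rfl, rfl⟩
    exact isHomogeneous_prod_map_X m

end MvPolynomial

theorem Fin.exists_step_lt_of_lt {α : Type*} [LinearOrder α] {k : ℕ} (f : Fin (k + 1) → α)
    {s t : Fin (k + 1)} (hst : s ≤ t) (h : f s < f t) :
    ∃ r : Fin k, s ≤ r.castSucc ∧ r.succ ≤ t ∧ f r.castSucc < f r.succ := by
  induction t using Fin.induction with
  | zero => exact absurd h (by rw [Fin.le_zero_iff.mp hst]; exact lt_irrefl _)
  | succ r ih =>
    have hs : s ≤ r.castSucc :=
      Fin.le_castSucc_iff.mpr (hst.lt_of_ne (by rintro rfl; exact lt_irrefl _ h))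
    by_cases hr : f r.castSucc < f r.succ
    · exact ⟨r, hs, le_rfl, hr⟩
    · obtain ⟨r', h₁, h₂, h₃⟩ := ih hs (h.trans_le (not_lt.mp hr))
      exact ⟨r', h₁, h₂.trans (Fin.castSucc_le_succ r), h₃⟩

theorem strictMono_ncard_Iio {α : Type*} [Preorder α] [Finite α] :
    StrictMono fun x : α => (Set.Iio x).ncard := fun x _ h =>
  Set.ncard_lt_ncard ((Set.ssubset_iff_of_subset (Set.Iio_subset_Iio h.le)).mpr
    ⟨x, h, lt_irrefl x⟩) (Set.toFinite _)

theorem exists_coord_forall_lt_of_isChain {ι : Type*} {β : ι → Type*} [∀ i, PartialOrder (β i)]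
    {s : Finset (∀ i, β i)} (hs : IsChain (· ≤ ·) (s : Set (∀ i, β i))) {u c : ∀ i, β i}
    (hu : u ∈ s) (hc : c ∈ s) (hcu : c ≠ u) :
    ∃ i, ∃ w ∈ s, u i ≠ w i ∧ ∀ v ∈ s, v i = u i → v ≠ u → v < u := by
  classical
  by_cases habove : ∃ x ∈ s, u < x
  · -- Take `c₀` minimal above `u` and `i` a coordinate where `u i < c₀ i`: an element `v > u`
    -- with `v i = u i` would have to lie above `c₀`, which is impossible in coordinate `i`.
    obtain ⟨c₀, hc₀, hmin⟩ :=
      (s.filter (u < ·)).exists_minimal (by simpa [Finset.filter_nonempty_iff] using habove)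
    simp only [Finset.mem_filter] at hc₀ hmin
    obtain ⟨hc₀s, huc₀⟩ := hc₀
    obtain ⟨i, hi⟩ := (Pi.lt_def.mp huc₀).2
    refine ⟨i, c₀, hc₀s, hi.ne, fun v hv hvi hvu => ?_⟩
    refine ((hs.total hv hu).resolve_right fun huv => ?_).lt_of_ne hvu
    replace huv : u < v := huv.lt_of_ne (Ne.symm hvu)
    have hc₀v : c₀ ≤ v := (hs.total hv hc₀s).elim (fun h => hmin ⟨hv, huv⟩ h) id
    exact lt_irrefl _ (hi.trans_le (hvi ▸ hc₀v i))
  · push Not at habove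
    obtain ⟨i, hi⟩ := Function.ne_iff.mp hcu
    refine ⟨i, c, hc, Ne.symm hi, fun v hv _ hvu => ?_⟩
    rcases hs.total hv hu with h | h
    · exact h.lt_of_ne hvu
    · exact absurd (h.lt_of_ne (Ne.symm hvu)) (habove v hv)

namespace ChowGS

variable {d : ℕ} {V : Fin d → Type} [∀ i, LinearOrder (V i)] {G : ∀ i, SimpleGraph (V i)}

section Simplex

variable {k : ℕ} {σ : Fin (k + 1) → GV V}

lemma mem_Iset {u v : GV V} {i : Fin d} : i ∈ Iset V u v ↔ u i < v i := by
  simp [Iset]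

lemma IsSimplexChain.eq_of_lt_of_lt (hσ : IsSimplexChain V G σ) {i : Fin d} {r r' : Fin k}
    (hr : σ r.castSucc i < σ r.succ i) (hr' : σ r'.castSucc i < σ r'.succ i) : r = r' := by
  by_contra hne
  exact Finset.disjoint_left.mp (hσ.2.2 r r' hne) (mem_Iset.mpr hr) (mem_Iset.mpr hr')

lemma IsSimplexChain.monotone_apply (hσ : IsSimplexChain V G σ) (i : Fin d) :
    Monotone fun j => σ j i :=
  fun _ _ hab => hσ.1 hab i

/-- Along a simplex each coordinate increases at most once, so any increase `σ s i < σ t i`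
is the increase across a single edge. -/
lemma IsSimplexChain.exists_step_eq (hσ : IsSimplexChain V G σ) {i : Fin d} {s t : Fin (k + 1)}
    (hst : s ≤ t) (h : σ s i < σ t i) :
    ∃ r : Fin k, σ s i = σ r.castSucc i ∧ σ r.succ i = σ t i := by
  have hmono := hσ.monotone_apply i
  obtain ⟨r, hsr, hrt, hr⟩ := Fin.exists_step_lt_of_lt (fun j => σ j i) hst h
  refine ⟨r, (hmono hsr).eq_of_not_lt fun hlt => ?_, (hmono hrt).eq_of_not_lt fun hlt => ?_⟩
  · obtain ⟨r', -, hr'r, hr'⟩ := Fin.exists_step_lt_of_lt (fun j => σ j i) hsr hlt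
    obtain rfl := hσ.eq_of_lt_of_lt hr' hr
    exact absurd hr'r (Fin.castSucc_lt_succ (i := r')).not_ge
  · obtain ⟨r', hrr', -, hr'⟩ := Fin.exists_step_lt_of_lt (fun j => σ j i) hrt hlt
    obtain rfl := hσ.eq_of_lt_of_lt hr hr'
    exact absurd hrr' (Fin.castSucc_lt_succ (i := r)).not_ge

lemma IsSimplexChain.adj_of_lt (hσ : IsSimplexChain V G σ) {i : Fin d} {s t : Fin (k + 1)}
    (h : σ s i < σ t i) : (G i).Adj (σ s i) (σ t i) := by
  obtain ⟨r, hs, ht⟩ := hσ.exists_step_eq ((hσ.monotone_apply i).reflect_lt h).le h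
  rw [hs, ← ht] at h ⊢
  exact ((hσ.2.1 r).2 i).resolve_left h.ne

lemma IsSimplexChain.not_lt_of_lt (hσ : IsSimplexChain V G σ) {i : Fin d} {s t p : Fin (k + 1)}
    (hst : σ s i < σ t i) : ¬ σ t i < σ p i := by
  intro htp
  have hmono := hσ.monotone_apply i
  obtain ⟨r, hs, ht⟩ := hσ.exists_step_eq (hmono.reflect_lt hst).le hst
  obtain ⟨r', ht', hp⟩ := hσ.exists_step_eq (hmono.reflect_lt htp).le htp
  obtain rfl := hσ.eq_of_lt_of_lt (hs ▸ ht ▸ hst) (ht' ▸ hp ▸ htp)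
  exact hst.ne (hs.trans ht'.symm)

lemma isNondegSimplex_of_strictMono (hσ : StrictMono σ)
    (hadj : ∀ a b i, σ a i = σ b i ∨ (G i).Adj (σ a i) (σ b i))
    (hthree : ∀ a b c i, σ a i < σ b i → ¬ σ b i < σ c i) : IsNondegSimplex V G σ := by
  have hdisj : ∀ j j' : Fin k, j < j' →
      Disjoint (Iset V (σ j.castSucc) (σ j.succ)) (Iset V (σ j'.castSucc) (σ j'.succ)) := by
    refine fun j j' hjj' => Finset.disjoint_left.mpr fun i hi hi' => ?_
    rw [mem_Iset] at hi hi'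
    exact hthree _ _ _ i (hi.trans_le (hσ.monotone (Fin.succ_le_castSucc_iff.mpr hjj') i)) hi'
  refine ⟨⟨hσ.monotone, fun j => ⟨hσ.monotone (Fin.castSucc_le_succ j), fun i => hadj _ _ i⟩,
    fun j j' hne => ?_⟩, hσ⟩
  rcases hne.lt_or_gt with h | h
  exacts [hdisj j j' h, (hdisj j' j h).symm]

end Simplex

section FormsSimplex

variable {l : List (GV V)} {x y z : GV V}

lemma FormsSimplex.isChain (hl : FormsSimplex V G l) : IsChain (· ≤ ·) {x | x ∈ l} := by
  obtain ⟨k, σ, hσ, hsub⟩ := hl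
  rintro x hx y hy -
  obtain ⟨s, rfl⟩ := List.mem_ofFn.mp (hsub.subset hx)
  obtain ⟨t, rfl⟩ := List.mem_ofFn.mp (hsub.subset hy)
  exact (le_total s t).imp (hσ.1 ·) (hσ.1 ·)

lemma FormsSimplex.eq_or_adj (hl : FormsSimplex V G l) (hx : x ∈ l) (hy : y ∈ l) (i : Fin d) :
    x i = y i ∨ (G i).Adj (x i) (y i) := by
  obtain ⟨k, σ, hσ, hsub⟩ := hl
  obtain ⟨s, rfl⟩ := List.mem_ofFn.mp (hsub.subset hx)
  obtain ⟨t, rfl⟩ := List.mem_ofFn.mp (hsub.subset hy)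
  rcases lt_trichotomy (σ s i) (σ t i) with h | h | h
  · exact Or.inr (hσ.adj_of_lt h)
  · exact Or.inl h
  · exact Or.inr (hσ.adj_of_lt h).symm

lemma FormsSimplex.not_lt_of_lt (hl : FormsSimplex V G l) (hx : x ∈ l) (hy : y ∈ l) (hz : z ∈ l)
    {i : Fin d} (h : x i < y i) : ¬ y i < z i := by
  obtain ⟨k, σ, hσ, hsub⟩ := hl
  obtain ⟨s, rfl⟩ := List.mem_ofFn.mp (hsub.subset hx)
  obtain ⟨t, rfl⟩ := List.mem_ofFn.mp (hsub.subset hy)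
  obtain ⟨p, rfl⟩ := List.mem_ofFn.mp (hsub.subset hz)
  exact hσ.not_lt_of_lt h

/-- The lexicographic order on `GV V` extends the product order, so listing a duplicate-free
simplex in lexicographic order gives a non-degenerate simplex. -/
lemma FormsSimplex.exists_isNondegSimplex {k : ℕ} {m : Multiset (GV V)}
    (hm : FormsSimplex V G m.toList) (hnd : m.Nodup) (hcard : Multiset.card m = k + 1) :
    ∃ σ : Fin (k + 1) → GV V, IsNondegSimplex V G σ ∧ (m.map X).prod = Cmon V σ := by
  classical
  set s : Finset (Lex (GV V)) := m.toFinset.map toLex.toEmbedding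
  have hs : s.card = k + 1 := by simp [s, Multiset.toFinset_card_of_nodup hnd, hcard]
  set e := s.orderIsoOfFin hs
  set σ : Fin (k + 1) → GV V := fun j => ofLex (e j : Lex (GV V))
  have hmem : ∀ j, σ j ∈ m.toList := fun j => by
    obtain ⟨x, hx, hxe⟩ := Finset.mem_map.mp (e j).2
    simpa [σ, ← hxe] using hx
  have hσ : StrictMono σ := by
    intro a b hab
    have hlex : toLex (σ a) < toLex (σ b) := e.strictMono hab
    rcases hm.isChain.total (hmem a) (hmem b) with h | h
    · exact h.lt_of_ne fun h' => hlex.ne (congrArg toLex h')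
    · exact absurd (Pi.toLex_monotone h) hlex.not_ge
  refine ⟨σ, isNondegSimplex_of_strictMono hσ (fun a b => hm.eq_or_adj (hmem a) (hmem b))
    (fun a b c _ => hm.not_lt_of_lt (hmem a) (hmem b) (hmem c)), ?_⟩
  calc (m.map X).prod = ∏ x ∈ m.toFinset, (X x : MvPolynomial (GV V) ℤ) := by
        rw [Finset.prod_eq_multiset_prod, Multiset.toFinset_val, hnd.dedup]
    _ = ∏ y ∈ s, X (ofLex y) := (Finset.prod_map _ toLex.toEmbedding fun y => X (ofLex y)).symm
    _ = ∏ y : s, X (ofLex (y : Lex (GV V))) := (Finset.prod_coe_sort s _).symm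
    _ = Cmon V σ := (Equiv.prod_comp e.toEquiv fun y => X (ofLex (y : Lex (GV V)))).symm

end FormsSimplex

section Measure

variable {α : Type*} [DecidableEq α] [Preorder α]

noncomputable def movingMeasure (m : Multiset α) : ℕ × ℕ :=
  (Multiset.card m - m.toFinset.card, (m.map fun x => (Set.Iio x).ncard).sum)

lemma movingMeasure_lt [Finite α] {u v : α} {M : Multiset α} (hvu : v ≠ u) (hv : v ∈ M → v < u) :
    Prod.Lex (· < ·) (· < ·) (movingMeasure (u ::ₘ v ::ₘ M)) (movingMeasure (u ::ₘ u ::ₘ M)) := by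
  have hle := Multiset.toFinset_card_le (u ::ₘ v ::ₘ M)
  simp only [Prod.lex_def, movingMeasure, Multiset.card_cons, Multiset.toFinset_cons,
    Multiset.map_cons, Multiset.sum_cons, Finset.insert_idem] at hle ⊢
  by_cases hvM : v ∈ M
  · rw [Finset.insert_eq_self.mpr (Multiset.mem_toFinset.mpr hvM)]
    have : (Set.Iio v).ncard < (Set.Iio u).ncard := strictMono_ncard_Iio (hv hvM)
    right
    constructor <;> omega
  · have hcard : (insert u (insert v M.toFinset)).card = (insert u M.toFinset).card + 1 := by
      rw [Finset.insert_comm, Finset.card_insert_of_notMem (by simp [hvu, hvM])]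
    left
    omega

end Measure

section Relations

variable [∀ i, Fintype (V i)]

lemma mkChow_eq_zero_iff {p : MvPolynomial (GV V) ℤ} : mkChow V G p = 0 ↔ p ∈ Irat V G :=
  Ideal.Quotient.eq_zero_iff_mem

lemma prod_X_mem_Irat_of_not_formsSimplex {l : List (GV V)} (h : ¬ FormsSimplex V G l) :
    (l.map X).prod ∈ Irat V G :=
  Ideal.subset_span (Or.inl (Or.inl ⟨l, h, rfl⟩))

/-- (R2) if `M` consists of copies of `u`; otherwise (R3) in a coordinate separating `u` from a
minimal vertex above it, or from any other vertex if none lies above `u`. -/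
lemma exists_moving_relation {u : GV V} {M : Multiset (GV V)}
    (hm : FormsSimplex V G (u ::ₘ u ::ₘ M).toList) :
    ∃ F : Finset (GV V), u ∈ F ∧ X u * (∑ v ∈ F, X v) * (M.map X).prod ∈ Irat V G ∧
      ∀ v ∈ F, v ≠ u → v ∈ M → v < u := by
  classical
  by_cases hM : ∀ c ∈ M, c = u
  · exact ⟨Finset.univ, Finset.mem_univ u,
      Ideal.mul_mem_right _ _ (Ideal.subset_span (Or.inl (Or.inr ⟨u, rfl⟩))),
      fun v _ hvu hv => absurd (hM v hv) hvu⟩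
  push Not at hM
  obtain ⟨c, hc, hcu⟩ := hM
  have hchain : IsChain (· ≤ ·) ((u ::ₘ u ::ₘ M).toFinset : Set (GV V)) :=
    hm.isChain.mono fun x hx => by simpa using hx
  obtain ⟨i, w, hw, hwi, hlt⟩ :=
    exists_coord_forall_lt_of_isChain hchain (by simp) (by simp [hc]) hcu
  have hwM : w ∈ M := by
    simpa [show w ≠ u from fun h => hwi (h ▸ rfl)] using hw
  refine ⟨Finset.univ.filter (· i = u i), by simp, ?_,
    fun v hv hvu hvM => hlt v (by simp [hvM]) (by simpa using hv) hvu⟩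
  have hR3 : X u * X w * ∑ v ∈ Finset.univ.filter (· i = u i), X v ∈ Irat V G :=
    Ideal.subset_span (Or.inr ⟨u, w, i, hwi, rfl⟩)
  rw [← Multiset.prod_map_erase hwM]
  convert Ideal.mul_mem_right ((M.erase w).map X).prod _ hR3 using 1
  ring

lemma mkChow_cons_cons_eq_neg_sum {u : GV V} {M : Multiset (GV V)} {F : Finset (GV V)}
    (hu : u ∈ F) (hF : X u * (∑ v ∈ F, X v) * (M.map X).prod ∈ Irat V G) :
    mkChow V G ((u ::ₘ u ::ₘ M).map X).prod =
      -∑ v ∈ F.erase u, mkChow V G ((u ::ₘ v ::ₘ M).map X).prod := by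
  rw [eq_neg_iff_add_eq_zero,
    Finset.add_sum_erase F (fun v => mkChow V G ((u ::ₘ v ::ₘ M).map X).prod) hu, ← map_sum,
    mkChow_eq_zero_iff]
  convert hF using 1
  simp [Finset.mul_sum, Finset.sum_mul, mul_assoc]

end Relations

section Moving

variable (V G) [∀ i, Fintype (V i)]

noncomputable def nondegSpan (k : ℕ) : Submodule ℤ (Chow V G) :=
  Submodule.span ℤ
    {x | ∃ σ : Fin (k + 1) → GV V, IsNondegSimplex V G σ ∧ x = mkChow V G (Cmon V σ)}

theorem mkChow_prod_mem_nondegSpan {k : ℕ} (m : Multiset (GV V))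
    (hm : Multiset.card m = k + 1) : mkChow V G (m.map X).prod ∈ nondegSpan V G k := by
  classical
  by_cases hsimp : FormsSimplex V G m.toList
  swap
  · rw [← Multiset.prod_map_toList, mkChow_eq_zero_iff.mpr
      (prod_X_mem_Irat_of_not_formsSimplex hsimp)]
    exact zero_mem _
  by_cases hnd : m.Nodup
  · obtain ⟨σ, hσ, hprod⟩ := hsimp.exists_isNondegSimplex hnd hm
    exact Submodule.subset_span ⟨σ, hσ, by rw [hprod]⟩
  obtain ⟨u, M, hmM⟩ : ∃ u M, m = u ::ₘ u ::ₘ M := by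
    simpa [Multiset.nodup_iff_ne_cons_cons] using hnd
  rw [hmM] at hsimp hm ⊢
  obtain ⟨F, huF, hF, hlt⟩ := exists_moving_relation hsimp
  rw [mkChow_cons_cons_eq_neg_sum huF hF]
  refine neg_mem (sum_mem fun v hv => ?_)
  exact mkChow_prod_mem_nondegSpan (u ::ₘ v ::ₘ M) (by simpa using hm)
termination_by movingMeasure m
decreasing_by
  rw [hmM]
  exact movingMeasure_lt (Finset.ne_of_mem_erase hv)
    (hlt v (Finset.mem_of_mem_erase hv) (Finset.ne_of_mem_erase hv))

end Moving

end ChowGS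

theorem ChowGS.moving_lemma_general
    {d : ℕ}
    (V : Fin d → Type) [∀ i, Fintype (V i)] [∀ i, LinearOrder (V i)]
    (G : ∀ i, SimpleGraph (V i)) (k : ℕ) :
    ChowGS.chowPiece V G (k + 1) =
      Submodule.span ℤ
        {x : ChowGS.Chow V G | ∃ σ : Fin (k + 1) → ChowGS.GV V,
          ChowGS.IsNondegSimplex V G σ ∧ x = ChowGS.mkChow V G (ChowGS.Cmon V σ)} := by
  refine le_antisymm ?_ (Submodule.span_le.mpr ?_)
  · rw [ChowGS.chowPiece, homogeneousSubmodule_eq_span_prod_map_X,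
      Submodule.map_span, Submodule.span_le]
    rintro _ ⟨_, ⟨m, hm, rfl⟩, rfl⟩
    exact ChowGS.mkChow_prod_mem_nondegSpan V G m hm
  · rintro _ ⟨σ, -, rfl⟩
    refine ⟨ChowGS.Cmon V σ, ?_, rfl⟩
    simpa [ChowGS.Cmon] using
      IsHomogeneous.prod Finset.univ (fun j => X (σ j)) (fun _ => 1)
        fun j _ => isHomogeneous_X ℤ (σ j)

/-- **Moving lemma** (Theorem 2.7): for every `k ≥ 0` the graded piece
`Chow^{k+1}(𝒢)` is generated, as a `ℤ`-module, by the classes of the monomials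
`C_σ = C_{v_0}⋯C_{v_k}` of non-degenerate `k`-simplices `σ : v_0 < … < v_k` of `𝒢`. -/
theorem ChowGS.moving_lemma
    {d : ℕ} (hd : 1 ≤ d)
    (V : Fin d → Type) [∀ i, Fintype (V i)] [∀ i, LinearOrder (V i)]
    (G : ∀ i, SimpleGraph (V i)) (hconn : ∀ i, (G i).Connected) (k : ℕ) :
    ChowGS.chowPiece V G (k + 1) =
      Submodule.span ℤ
        {x : ChowGS.Chow V G | ∃ σ : Fin (k + 1) → ChowGS.GV V,
          ChowGS.IsNondegSimplex V G σ ∧ x = ChowGS.mkChow V G (ChowGS.Cmon V σ)} :=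
  ChowGS.moving_lemma_general V G k
end

section
/- Let d ≥ 1 and let G_1,…,G_d be finite simple connected graphs with totally ordered vertex sets, and let 𝒢 = G_1×…×G_d. Let σ be a k-simplex of 𝒢 with vertices v_0 ≤ v_1 ≤ … ≤ v_k having at least two distinct vertices. Then there exist an element β in the ideal I_1, and for each 1 ≤ l ≤ k, each non-degenerate l-simplex τ whose vertex set contains that of σ, and each multiset S ∈ 𝒜_τ(k−l), an integer a_{τ,S}, such that in Z(𝒢): C_σ = β + Σ_{l=1}^{k} Σ_{τ, S} a_{τ,S} · C_τ · ∏_{(i,ε)∈S} R^ε_{τ,i}. -/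
open MvPolynomial

namespace ChowGS

section Rels

variable {d : ℕ}
variable (V : Fin d → Type) [∀ i, Fintype (V i)] [∀ i, LinearOrder (V i)]
variable (G : ∀ i, SimpleGraph (V i))

/-- The ideal `I_1` generated by the relations (R1) alone. -/
noncomputable def Ione : Ideal (MvPolynomial (GV V) ℤ) :=
  Ideal.span {p | ∃ l : List (GV V), ¬ FormsSimplex V G l ∧ p = (l.map MvPolynomial.X).prod}

/-- `I(τ)` for a simplex `τ`: the (disjoint) union of the sets `I(τ_t, τ_{t+1})`,
which equals `I(τ_0, τ_last)`. -/
def Itau {k : ℕ} (τ : Fin (k + 1) → GV V) : Finset (Fin d) :=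
  Iset V (τ 0) (τ (Fin.last k))

/-- `R^ε_{τ,i}`: for `i ∈ I(τ)`, the sum of all `C_w` over the vertices `w` whose `i`-th
coordinate equals the lower (`ε = false`) resp. upper (`ε = true`) endpoint of the edge of
`G_i` traversed by `τ` in direction `i`. -/
noncomputable def Rend {k : ℕ} (τ : Fin (k + 1) → GV V) (i : Fin d) (ε : Bool) :
    MvPolynomial (GV V) ℤ :=
  ∑ w ∈ Finset.univ.filter
      (fun w : GV V => w i = (if ε then τ (Fin.last k) else τ 0) i),
    MvPolynomial.X w

/-- `𝒜_τ(m)`: the multisets of size `m` of pairs `(i, ε)` with `i ∈ I(τ)`. -/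
def Atau {k : ℕ} (τ : Fin (k + 1) → GV V) (m : ℕ) : Set (Multiset (Fin d × Bool)) :=
  {S | Multiset.card S = m ∧ ∀ p ∈ S, p.1 ∈ Itau V τ}

/-- The product `∏_{(i,ε) ∈ S} R^ε_{τ,i}`. -/
noncomputable def Rprod {k : ℕ} (τ : Fin (k + 1) → GV V) (S : Multiset (Fin d × Bool)) :
    MvPolynomial (GV V) ℤ :=
  (S.map fun p => Rend V τ p.1 p.2).prod

end Rels
end ChowGS
namespace ChowGS

section Aux

variable {d : ℕ}
variable (V : Fin d → Type) [∀ i, Fintype (V i)] [∀ i, LinearOrder (V i)]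
variable (G : ∀ i, SimpleGraph (V i))

/-- If no step in `[a, b)` changes the value, then `f a = f b`. -/
lemma eq_of_steps_nat {α : Type*} {n : ℕ} (f : Fin (n + 1) → α) (a : Fin (n + 1)) :
    ∀ (b : ℕ) (hb : b < n + 1), (a : ℕ) ≤ b →
      (∀ t : Fin n, (a : ℕ) ≤ (t : ℕ) → (t : ℕ) < b → f t.castSucc = f t.succ) →
      f a = f ⟨b, hb⟩ := by
  intro b
  induction b with
  | zero =>
    intro hb hab _
    have : a = ⟨0, hb⟩ := Fin.ext (by simp only [Fin.val_mk]; omega)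
    rw [this]
  | succ b ih =>
    intro hb hab h
    rcases eq_or_lt_of_le hab with heq | hlt
    · have : a = ⟨b + 1, hb⟩ := Fin.ext (by simp only [Fin.val_mk]; omega)
      rw [this]
    · have hb' : b < n + 1 := by omega
      have hbn : b < n := by omega
      have h1 : f a = f ⟨b, hb'⟩ :=
        ih hb' (by omega) fun t ht1 ht2 => h t ht1 (by omega)
      have h2 : f (Fin.castSucc ⟨b, hbn⟩) = f (Fin.succ ⟨b, hbn⟩) :=
        h ⟨b, hbn⟩ (by simp only [Fin.val_mk]; omega) (by simp only [Fin.val_mk]; omega)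
      have e1 : Fin.castSucc (⟨b, hbn⟩ : Fin n) = ⟨b, hb'⟩ := rfl
      have e2 : Fin.succ (⟨b, hbn⟩ : Fin n) = ⟨b + 1, hb⟩ := rfl
      rw [h1, ← e1, h2, e2]

lemma eq_of_steps {α : Type*} {n : ℕ} (f : Fin (n + 1) → α) {a b : Fin (n + 1)} (hab : a ≤ b)
    (h : ∀ t : Fin n, (a : ℕ) ≤ (t : ℕ) → (t : ℕ) < (b : ℕ) → f t.castSucc = f t.succ) :
    f a = f b := by
  have := eq_of_steps_nat f a (b : ℕ) b.isLt hab h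
  simpa using this

/-- Each coordinate changes at most once along a simplex chain. -/
lemma change_step_unique {k : ℕ} {σ : Fin (k + 1) → GV V} (hσ : IsSimplexChain V G σ)
    {i : Fin d} {t t' : Fin k} (ht : σ t.castSucc i ≠ σ t.succ i)
    (ht' : σ t'.castSucc i ≠ σ t'.succ i) : t = t' := by
  by_contra hne
  have h1 : i ∈ Iset V (σ t.castSucc) (σ t.succ) :=
    Finset.mem_filter.mpr ⟨Finset.mem_univ i,
      lt_of_le_of_ne (hσ.1 (Fin.castSucc_le_succ t) i) ht⟩
  have h2 : i ∈ Iset V (σ t'.castSucc) (σ t'.succ) :=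
    Finset.mem_filter.mpr ⟨Finset.mem_univ i,
      lt_of_le_of_ne (hσ.1 (Fin.castSucc_le_succ t') i) ht'⟩
  exact (Finset.disjoint_left.mp (hσ.2.2 t t' hne) h1) h2

/-- Each coordinate takes at most two values along a simplex chain: the endpoints' values. -/
lemma coord_two_values {k : ℕ} {σ : Fin (k + 1) → GV V} (hσ : IsSimplexChain V G σ)
    (i : Fin d) (r : Fin (k + 1)) : σ r i = σ 0 i ∨ σ r i = σ (Fin.last k) i := by
  by_cases hex : ∃ t : Fin k, (t : ℕ) < (r : ℕ) ∧ σ t.castSucc i ≠ σ t.succ i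
  · right
    obtain ⟨t, htr, htne⟩ := hex
    refine eq_of_steps (fun s => σ s i) (Fin.le_last r) fun t' h1 h2 => ?_
    by_contra hne
    have : t = t' := change_step_unique V G hσ htne hne
    omega
  · left
    push_neg at hex
    have := eq_of_steps (fun s => σ s i) (Fin.zero_le r)
      (fun t' _ h2 => hex t' h2)
    exact this.symm

lemma oneSimplex_of_le {k : ℕ} {σ : Fin (k + 1) → GV V} (hσ : IsSimplexChain V G σ)
    {a b : Fin (k + 1)} (hab : a ≤ b) : OneSimplex V G (σ a) (σ b) := by
  refine ⟨hσ.1 hab, fun i => ?_⟩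
  by_cases hex : ∃ t : Fin k, (a : ℕ) ≤ (t : ℕ) ∧ (t : ℕ) < (b : ℕ) ∧
      σ t.castSucc i ≠ σ t.succ i
  · obtain ⟨t, h1, h2, h3⟩ := hex
    right
    have hatc : a ≤ t.castSucc := by rw [Fin.le_def]; simpa using h1
    have htsb : t.succ ≤ b := by rw [Fin.le_def]; simpa using h2
    have e1 : σ a i = σ t.castSucc i := by
      refine eq_of_steps (fun s => σ s i) hatc fun t' h1' h2' => ?_
      by_contra hne
      have : t = t' := change_step_unique V G hσ h3 hne
      subst this
      simp only [Fin.coe_castSucc] at h2'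
      omega
    have e2 : σ t.succ i = σ b i := by
      refine eq_of_steps (fun s => σ s i) htsb fun t' h1' h2' => ?_
      by_contra hne
      have : t = t' := change_step_unique V G hσ h3 hne
      subst this
      simp only [Fin.val_succ] at h1'
      omega
    rcases (hσ.2.1 t).2 i with heq | hadj
    · exact absurd heq h3
    · rw [e1, ← e2]; exact hadj
  · left
    push_neg at hex
    exact eq_of_steps (fun s => σ s i) hab fun t' h1 h2 => hex t' h1 h2

lemma exists_change_of_ne {k : ℕ} {σ : Fin (k + 1) → GV V}
    {a b : Fin (k + 1)} (hab : a ≤ b) {i : Fin d} (hi : σ a i ≠ σ b i) :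
    ∃ t : Fin k, (a : ℕ) ≤ (t : ℕ) ∧ (t : ℕ) < (b : ℕ) ∧ σ t.castSucc i ≠ σ t.succ i := by
  by_contra h
  push_neg at h
  exact hi (eq_of_steps (fun s => σ s i) hab fun t h1 h2 => h t h1 h2)

/-- A monotone reindexing of a simplex chain is a simplex chain. -/
lemma chain_comp_monotone {k m : ℕ} {σ : Fin (k + 1) → GV V} (hσ : IsSimplexChain V G σ)
    {g : Fin (m + 1) → Fin (k + 1)} (hg : Monotone g) : IsSimplexChain V G (σ ∘ g) := by
  refine ⟨hσ.1.comp hg, fun s => oneSimplex_of_le V G hσ (hg (Fin.castSucc_le_succ s)),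
    fun s s' hss => ?_⟩
  rw [Finset.disjoint_left]
  intro i hi hi'
  have hlt : σ (g s.castSucc) i < σ (g s.succ) i := (Finset.mem_filter.mp hi).2
  have hlt' : σ (g s'.castSucc) i < σ (g s'.succ) i := (Finset.mem_filter.mp hi').2
  obtain ⟨t, ht1, ht2, ht3⟩ :=
    exists_change_of_ne V (hg (Fin.castSucc_le_succ s)) (ne_of_lt hlt)
  obtain ⟨t', ht1', ht2', ht3'⟩ :=
    exists_change_of_ne V (hg (Fin.castSucc_le_succ s')) (ne_of_lt hlt')
  have htt : t = t' := change_step_unique V G hσ ht3 ht3'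
  rcases hss.lt_or_gt with hlt1 | hlt1
  · have hv : (s : ℕ) < (s' : ℕ) := hlt1
    have : s.succ ≤ s'.castSucc := by
      rw [Fin.le_def, Fin.val_succ, Fin.coe_castSucc]; omega
    have := hg this
    rw [Fin.le_def] at this
    omega
  · have hv : (s' : ℕ) < (s : ℕ) := hlt1
    have : s'.succ ≤ s.castSucc := by
      rw [Fin.le_def, Fin.val_succ, Fin.coe_castSucc]; omega
    have := hg this
    rw [Fin.le_def] at this
    omega

/-- From `FormsSimplex` for a list of length `m+1`, extract an honest simplex chain
realizing the same multiset. -/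
lemma exists_chain_of_formsSimplex {m : ℕ} {l : List (GV V)} (hl : FormsSimplex V G l)
    (hlen : l.length = m + 1) :
    ∃ σ : Fin (m + 1) → GV V, IsSimplexChain V G σ ∧ (List.ofFn σ).Perm l := by
  obtain ⟨K, ρ, hρ, hsub⟩ := hl
  obtain ⟨l', hperm, hsl⟩ := hsub
  obtain ⟨f, hf⟩ := List.sublist_iff_exists_fin_orderEmbedding_get_eq.mp hsl
  have hlen' : l'.length = m + 1 := hperm.length_eq.trans hlen
  have hlenρ : (List.ofFn ρ).length = K + 1 := List.length_ofFn
  set g : Fin (m + 1) → Fin (K + 1) :=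
    fun r => Fin.cast hlenρ (f (Fin.cast hlen'.symm r)) with hg
  have hgmono : Monotone g := by
    intro a b hab
    rw [Fin.le_def]
    simp only [hg, Fin.coe_cast]
    exact f.le_iff_le.mpr (by rw [Fin.le_def]; simpa using hab)
  refine ⟨ρ ∘ g, chain_comp_monotone V G hρ hgmono, ?_⟩
  have : List.ofFn (ρ ∘ g) = l' := by
    refine List.ext_get (by simp [hlen']) fun n h1 h2 => ?_
    have hfn := hf ⟨n, h2⟩
    simp only [List.get_ofFn] at hfn ⊢
    rw [hfn]
    exact congrArg ρ (Fin.ext rfl)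
  rw [this]
  exact hperm

/-- Two-values lemma packaged for endpoints. -/
lemma endpoints_eq {l : ℕ} {τ : Fin (l + 1) → GV V} (hτ : IsSimplexChain V G τ)
    {i : Fin d} {x y : GV V} (hx : x ∈ Set.range τ) (hy : y ∈ Set.range τ)
    (hxy : x i < y i) : τ 0 i = x i ∧ τ (Fin.last l) i = y i := by
  obtain ⟨p, rfl⟩ := hx
  obtain ⟨q, rfl⟩ := hy
  have h0l : τ 0 i ≤ τ (Fin.last l) i := hτ.1 (Fin.zero_le _) i
  rcases coord_two_values V G hτ i p with hp | hp <;>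
    rcases coord_two_values V G hτ i q with hq | hq
  · rw [hp, hq] at hxy; exact absurd hxy (lt_irrefl _)
  · exact ⟨hp.symm, hq.symm⟩
  · rw [hp, hq] at hxy; exact absurd (hxy.trans_le h0l) (lt_irrefl _)
  · rw [hp, hq] at hxy; exact absurd hxy (lt_irrefl _)

end Aux

section Core

variable {d : ℕ}
variable (V : Fin d → Type) [∀ i, Fintype (V i)] [∀ i, LinearOrder (V i)]
variable (G : ∀ i, SimpleGraph (V i))

/-- The set of generators appearing in the rewriting proposition. -/
def SpanSet (k : ℕ) (R : Set (GV V)) : Set (MvPolynomial (GV V) ℤ) :=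
  {p | ∃ l : ℕ, 1 ≤ l ∧ l ≤ k ∧
    ∃ τ : Fin (l + 1) → GV V, IsNondegSimplex V G τ ∧
      R ⊆ Set.range τ ∧
      ∃ S ∈ Atau V τ (k - l), p = Cmon V τ * Rprod V τ S}

lemma spanSet_mono (k : ℕ) {R R' : Set (GV V)} (h : R ⊆ R') :
    SpanSet V G k R' ⊆ SpanSet V G k R := by
  rintro p ⟨l, h1, h2, τ, h3, h4, rest⟩
  exact ⟨l, h1, h2, τ, h3, h.trans h4, rest⟩

lemma cmon_eq_list {k : ℕ} (σ : Fin (k + 1) → GV V) :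
    Cmon V σ = ((List.ofFn σ).map X).prod := by
  rw [List.map_ofFn, List.prod_ofFn]
  rfl

lemma sum_ofFn_map {k : ℕ} (g : GV V → ℕ) (σ : Fin (k + 1) → GV V) :
    ((List.ofFn σ).map g).sum = ∑ r, g (σ r) := by
  rw [List.map_ofFn, List.sum_ofFn]
  rfl

lemma dist_of_range {k m : ℕ} {σ : Fin (k + 1) → GV V} {σ'' : Fin (m + 1) → GV V}
    (h : Set.range σ ⊆ Set.range σ'') (hd : ∃ j j', σ j ≠ σ j') :
    ∃ j j', σ'' j ≠ σ'' j' := by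
  obtain ⟨j, j', hjj⟩ := hd
  obtain ⟨a, ha⟩ := h (Set.mem_range_self j)
  obtain ⟨b, hb⟩ := h (Set.mem_range_self j')
  exact ⟨a, b, by rw [ha, hb]; exact hjj⟩

lemma ne_endpoints {k : ℕ} {σ : Fin (k + 1) → GV V} (hσ : IsSimplexChain V G σ)
    (hdist : ∃ j j', σ j ≠ σ j') : σ 0 ≠ σ (Fin.last k) := by
  intro h
  obtain ⟨j, j', hjj⟩ := hdist
  have hc : ∀ r, σ r = σ 0 :=
    fun r => le_antisymm ((hσ.1 (Fin.le_last r)).trans_eq h.symm) (hσ.1 (Fin.zero_le r))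
  exact hjj (by rw [hc j, hc j'])

noncomputable local instance lowerDec (z : GV V) : DecidablePred (fun u : GV V => u ≤ z) :=
  fun _ => Classical.dec _

/-- The number of vertices below a given vertex. -/
noncomputable def lowerCount (z : GV V) : ℕ :=
  (Finset.univ.filter (fun u : GV V => u ≤ z)).card

lemma lowerCount_le (z : GV V) : lowerCount V z ≤ Fintype.card (GV V) := by
  unfold lowerCount
  exact (Finset.card_filter_le _ _).trans (le_of_eq Finset.card_univ)

lemma lowerCount_lt {z z' : GV V} (h : z < z') : lowerCount V z < lowerCount V z' := by
  unfold lowerCount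
  apply Finset.card_lt_card
  rw [Finset.ssubset_def]
  constructor
  · intro u hu
    exact Finset.mem_filter.mpr ⟨Finset.mem_univ u, le_trans (Finset.mem_filter.mp hu).2 h.le⟩
  · intro hall
    have := hall (Finset.mem_filter.mpr ⟨Finset.mem_univ z', le_refl z'⟩)
    exact absurd (le_antisymm (Finset.mem_filter.mp this).2 h.le) (ne_of_gt h)

lemma rend_eq_of_range {k l : ℕ} {σ : Fin (k + 1) → GV V} {τ : Fin (l + 1) → GV V}
    (hσc : IsSimplexChain V G σ) (hτc : IsSimplexChain V G τ) {i : Fin d} {x y : GV V}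
    (hxσ : x ∈ Set.range σ) (hyσ : y ∈ Set.range σ)
    (hxτ : x ∈ Set.range τ) (hyτ : y ∈ Set.range τ)
    (hxy : x i < y i) (ε : Bool) :
    Rend V σ i ε = Rend V τ i ε ∧ i ∈ Itau V τ := by
  obtain ⟨h0σ, hlσ⟩ := endpoints_eq V G hσc hxσ hyσ hxy
  obtain ⟨h0τ, hlτ⟩ := endpoints_eq V G hτc hxτ hyτ hxy
  constructor
  · cases ε
    · show (∑ w ∈ Finset.univ.filter (fun w : GV V => w i = σ 0 i), X w) =
        ∑ w ∈ Finset.univ.filter (fun w : GV V => w i = τ 0 i), X w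
      rw [h0σ, h0τ]
    · show (∑ w ∈ Finset.univ.filter (fun w : GV V => w i = σ (Fin.last k) i), X w) =
        ∑ w ∈ Finset.univ.filter (fun w : GV V => w i = τ (Fin.last l) i), X w
      rw [hlσ, hlτ]
  · refine Finset.mem_filter.mpr ⟨Finset.mem_univ i, ?_⟩
    rw [h0τ, hlτ]
    exact hxy

set_option maxHeartbeats 1000000 in
theorem rewriting_core :
    ∀ (e c k : ℕ) (σ : Fin (k + 1) → GV V), IsSimplexChain V G σ →
      (∃ j j' : Fin (k + 1), σ j ≠ σ j') →
      (k + 1) - (Finset.image σ Finset.univ).card ≤ e →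
      (k + 1) * Fintype.card (GV V) - (∑ r, lowerCount V (σ r)) ≤ c →
      ∃ β ∈ Ione V G, Cmon V σ - β ∈ Submodule.span ℤ (SpanSet V G k (Set.range σ)) := by
  intro e
  induction e with
  | zero =>
    -- excess 0 : σ is already non-degenerate
    intro c k σ hσ hdist hexc _
    have hcardle : (Finset.image σ Finset.univ).card ≤ k + 1 := by
      have h1 := Finset.card_image_le (s := (Finset.univ : Finset (Fin (k + 1)))) (f := σ)
      simpa using h1
    have hcard : (Finset.image σ Finset.univ).card = k + 1 := by omega
    have hinj : Function.Injective σ := by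
      have h2 : Set.InjOn σ (Finset.univ : Finset (Fin (k + 1))) := by
        rw [← Finset.card_image_iff]
        rw [hcard]
        simp
      intro a b hab
      exact h2 (by simp) (by simp) hab
    have hsm : StrictMono σ := hσ.1.strictMono_of_injective hinj
    obtain ⟨j, j', hjj⟩ := hdist
    have hk : 1 ≤ k := by
      by_contra hcon
      push_neg at hcon
      interval_cases k
      · exact hjj (congrArg σ (Fin.ext (by omega)))
    refine ⟨0, Ideal.zero_mem _, ?_⟩
    rw [sub_zero]
    apply Submodule.subset_span
    refine ⟨k, hk, le_refl k, σ, ⟨hσ, hsm⟩, subset_rfl, 0, ⟨by simp, by simp⟩, ?_⟩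
    show Cmon V σ = Cmon V σ * Rprod V σ 0
    rw [Rprod]
    simp
  | succ e IHe =>
    intro c
    induction c using Nat.strong_induction_on with
    | _ c IHc =>
    intro k σ hσ hdist hexc hphi
    by_cases hle : (k + 1) - (Finset.image σ Finset.univ).card ≤ e
    · exact IHe _ k σ hσ hdist hle le_rfl
    push_neg at hle
    have hexc' : (k + 1) - (Finset.image σ Finset.univ).card = e + 1 := by omega
    have hcard1 : 1 ≤ (Finset.image σ Finset.univ).card :=
      Finset.card_pos.mpr ⟨σ 0, Finset.mem_image_of_mem σ (Finset.mem_univ 0)⟩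
    have hcardle : (Finset.image σ Finset.univ).card ≤ k + 1 := by
      have h1 := Finset.card_image_le (s := (Finset.univ : Finset (Fin (k + 1)))) (f := σ)
      simpa using h1
    rcases k with _ | k'
    · omega
    -- σ is degenerate: find the top repeated vertex
    have hnotsm : ¬ StrictMono σ := by
      intro hsm
      have : (Finset.image σ Finset.univ).card = k' + 2 := by
        rw [Finset.card_image_of_injective _ hsm.injective]
        simp
      omega
    rw [Fin.strictMono_iff_lt_succ] at hnotsm
    push_neg at hnotsm
    obtain ⟨t0, ht0⟩ := hnotsm
    set E := Finset.univ.filter (fun u : Fin (k' + 1) => σ u.castSucc = σ u.succ) with hE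
    have hEne : E.Nonempty :=
      ⟨t0, Finset.mem_filter.mpr ⟨Finset.mem_univ t0,
        ((hσ.1 (Fin.castSucc_le_succ t0)).lt_or_eq).resolve_left ht0⟩⟩
    set t := E.max' hEne with ht
    have htE : σ t.castSucc = σ t.succ := (Finset.mem_filter.mp (E.max'_mem hEne)).2
    have htmax : ∀ u ∈ E, u ≤ t := fun u hu => E.le_max' u hu
    set v := σ t.succ with hvdef
    have hvt : σ t.castSucc = v := htE
    -- remove one copy of v
    set σ' : Fin (k' + 1) → GV V := σ ∘ t.succ.succAbove with hσ'def
    have hσ'chain : IsSimplexChain V G σ' :=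
      chain_comp_monotone V G hσ (Fin.strictMono_succAbove t.succ).monotone
    have hCσ : Cmon V σ = X v * Cmon V σ' := by
      unfold Cmon
      exact Fin.prod_univ_succAbove (fun r => X (σ r)) t.succ
    have hrange : Set.range σ' = Set.range σ := by
      apply Set.Subset.antisymm
      · rintro _ ⟨r, rfl⟩
        exact ⟨t.succ.succAbove r, rfl⟩
      · rintro _ ⟨r, rfl⟩
        by_cases hr : r = t.succ
        · subst hr
          obtain ⟨a, ha⟩ := Fin.exists_succAbove_eq (Fin.castSucc_lt_succ : t.castSucc < t.succ).ne
          refine ⟨a, ?_⟩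
          show σ (t.succ.succAbove a) = σ t.succ
          rw [ha, htE]
        · obtain ⟨a, ha⟩ := Fin.exists_succAbove_eq hr
          refine ⟨a, ?_⟩
          show σ (t.succ.succAbove a) = σ r
          rw [ha]
    have himg : Finset.image σ' Finset.univ = Finset.image σ Finset.univ := by
      apply Finset.coe_injective
      simp only [Finset.coe_image, Finset.coe_univ, Set.image_univ]
      exact hrange
    have hdist' : ∃ j j', σ' j ≠ σ' j' := dist_of_range V (hrange.symm.subset) hdist
    -- choose the coordinate and direction
    obtain ⟨i, ε, x, y, hxr, hyr, hxy, hvmem, hkey⟩ :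
        ∃ (i : Fin d) (ε : Bool) (x y : GV V),
          x ∈ Set.range σ ∧ y ∈ Set.range σ ∧ x i < y i ∧
          v i = (if ε then σ (Fin.last (k' + 1)) else σ 0) i ∧
          (∀ w : GV V, w i = (if ε then σ (Fin.last (k' + 1)) else σ 0) i → w ≠ v →
            w ∈ Finset.image σ Finset.univ → v < w) := by
      by_cases hv0 : v = σ 0
      · -- Case A : the repeated vertex is the bottom vertex
        have hconst0 : ∀ r : Fin (k' + 2), (r : ℕ) ≤ (t : ℕ) + 1 → σ r = v := by
          intro r hr
          refine le_antisymm ?_ ?_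
          · exact hσ.1 (by rw [Fin.le_def, Fin.val_succ]; omega)
          · rw [hv0]; exact hσ.1 (Fin.zero_le r)
        have h0l : σ 0 ≠ σ (Fin.last (k' + 1)) := ne_endpoints V G hσ hdist
        have htlt : (t : ℕ) + 1 < k' + 1 := by
          by_contra hcon
          push_neg at hcon
          have htv : (t : ℕ) = k' := by have := t.isLt; omega
          have hlast : (t.succ : Fin (k' + 2)) = Fin.last (k' + 1) := by
            apply Fin.ext
            rw [Fin.val_succ, Fin.val_last, htv]
          apply h0l
          rw [← hlast, ← hv0]
        set s : Fin (k' + 1) := ⟨(t : ℕ) + 1, htlt⟩ with hs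
        have hscast : s.castSucc = t.succ := by
          apply Fin.ext
          rw [Fin.coe_castSucc, Fin.val_succ]
        have hsstrict : σ s.castSucc ≠ σ s.succ := by
          intro hcon
          have hsE : s ∈ E := Finset.mem_filter.mpr ⟨Finset.mem_univ s, hcon⟩
          have hst := htmax s hsE
          rw [Fin.le_def] at hst
          simp only [hs] at hst
          omega
        obtain ⟨i, hi⟩ := Function.ne_iff.mp hsstrict
        have hxy : σ s.castSucc i < σ s.succ i :=
          lt_of_le_of_ne (hσ.1 (Fin.castSucc_le_succ s) i) hi
        refine ⟨i, false, σ s.castSucc, σ s.succ, ⟨s.castSucc, rfl⟩, ⟨s.succ, rfl⟩, hxy, ?_, ?_⟩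
        · show v i = σ 0 i
          rw [hv0]
        · intro w hwval hwv hwim
          exfalso
          have hwval' : w i = σ 0 i := hwval
          obtain ⟨r, -, rfl⟩ := Finset.mem_image.mp hwim
          rcases le_or_gt (r : ℕ) ((t : ℕ) + 1) with hr | hr
          · exact hwv (hconst0 r hr)
          · have heqy : σ s.succ i = σ r i := by
              refine eq_of_steps (fun z => σ z i) ?_ fun u h1 h2 => ?_
              · rw [Fin.le_def, Fin.val_succ]
                simp only [hs]
                omega
              · by_contra hne
                have hus : u = s := change_step_unique V G hσ hne hi
                subst hus
                rw [Fin.val_succ] at h1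
                omega
            have h00 : σ 0 i = σ s.castSucc i := by
              rw [hscast]
              exact (congrFun hv0 i).symm
            have : σ 0 i < σ s.succ i := by rw [h00]; exact hxy
            rw [heqy, ← hwval'] at this
            exact lt_irrefl _ this
      · -- Case B : the repeated vertex has a predecessor
        have hSne : ∃ u : Fin (k' + 1), (u : ℕ) < (t : ℕ) ∧ σ u.castSucc ≠ σ u.succ := by
          by_contra hcon
          push_neg at hcon
          apply hv0
          rw [← hvt]
          exact (eq_of_steps σ (Fin.zero_le t.castSucc)
            (fun u _ h2 => hcon u (by rw [Fin.coe_castSucc] at h2; omega))).symm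
        set S2 := Finset.univ.filter
          (fun u : Fin (k' + 1) => (u : ℕ) < (t : ℕ) ∧ σ u.castSucc ≠ σ u.succ) with hS2
        have hS2ne : S2.Nonempty := by
          obtain ⟨u, h1, h2⟩ := hSne
          exact ⟨u, Finset.mem_filter.mpr ⟨Finset.mem_univ u, h1, h2⟩⟩
        set s := S2.max' hS2ne with hsdef
        have hsmem := Finset.mem_filter.mp (S2.max'_mem hS2ne)
        have hslt : (s : ℕ) < (t : ℕ) := hsmem.2.1
        have hsstrict : σ s.castSucc ≠ σ s.succ := hsmem.2.2
        have hsmax : ∀ u ∈ S2, u ≤ s := fun u hu => S2.le_max' u hu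
        have hssv : σ s.succ = v := by
          rw [← hvt]
          refine eq_of_steps σ ?_ fun u h1 h2 => ?_
          · rw [Fin.le_def, Fin.val_succ, Fin.coe_castSucc]
            omega
          · by_contra hne
            have huS : u ∈ S2 := Finset.mem_filter.mpr ⟨Finset.mem_univ u,
              by rw [Fin.coe_castSucc] at h2; omega, hne⟩
            have hus := hsmax u huS
            rw [Fin.le_def] at hus
            rw [Fin.val_succ] at h1
            omega
        obtain ⟨i, hi⟩ := Function.ne_iff.mp hsstrict
        have hxy : σ s.castSucc i < σ s.succ i :=
          lt_of_le_of_ne (hσ.1 (Fin.castSucc_le_succ s) i) hi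
        have hend := endpoints_eq V G hσ ⟨s.castSucc, rfl⟩ ⟨s.succ, rfl⟩ hxy
        refine ⟨i, true, σ s.castSucc, σ s.succ, ⟨s.castSucc, rfl⟩, ⟨s.succ, rfl⟩, hxy, ?_, ?_⟩
        · show v i = σ (Fin.last (k' + 1)) i
          rw [hend.2, hssv]
        · intro w hwval hwv hwim
          have hwval' : w i = σ (Fin.last (k' + 1)) i := hwval
          obtain ⟨r, -, rfl⟩ := Finset.mem_image.mp hwim
          rcases le_or_gt ((s : ℕ) + 1) (r : ℕ) with hr | hr
          · have hvr : v ≤ σ r := by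
              rw [← hssv]
              exact hσ.1 (by rw [Fin.le_def, Fin.val_succ]; omega)
            exact lt_of_le_of_ne hvr (fun h => hwv h.symm)
          · exfalso
            have hrc : σ r i = σ s.castSucc i := by
              refine eq_of_steps (fun z => σ z i) ?_ fun u h1 h2 => ?_
              · rw [Fin.le_def, Fin.coe_castSucc]
                omega
              · by_contra hne
                have hus : u = s := change_step_unique V G hσ hne hi
                subst hus
                rw [Fin.coe_castSucc] at h2
                omega
            have : σ s.castSucc i = σ s.succ i := by
              rw [← hrc, hwval', hend.2]
            exact hi this
    -- common part
    have hend := endpoints_eq V G hσ hxr hyr hxy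
    have hvF : v ∈ Finset.univ.filter
        (fun w : GV V => w i = (if ε then σ (Fin.last (k' + 1)) else σ 0) i) :=
      Finset.mem_filter.mpr ⟨Finset.mem_univ v, hvmem⟩
    have hRend : Rend V σ i ε = ∑ w ∈ Finset.univ.filter
        (fun w : GV V => w i = (if ε then σ (Fin.last (k' + 1)) else σ 0) i), X w := rfl
    set Filt := Finset.univ.filter
        (fun w : GV V => w i = (if ε then σ (Fin.last (k' + 1)) else σ 0) i) with hFilt
    have hstep1 : Cmon V σ = Cmon V σ' * Rend V σ i ε - ∑ w ∈ Filt.erase v, Cmon V σ' * X w := by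
      have hexpand : Cmon V σ' * Rend V σ i ε
          = Cmon V σ' * X v + ∑ w ∈ Filt.erase v, Cmon V σ' * X w := by
        rw [hRend, Finset.mul_sum, ← Finset.add_sum_erase _ _ hvF]
      rw [hexpand, hCσ]
      ring
    -- recursion on σ'
    have hexcσ' : (k' + 1) - (Finset.image σ' Finset.univ).card ≤ e := by
      rw [himg]; omega
    obtain ⟨β', hβ'I, hβ'sp⟩ :=
      IHe ((k' + 1) * Fintype.card (GV V) - ∑ r, lowerCount V (σ' r)) k' σ' hσ'chain hdist'
        hexcσ' le_rfl
    -- multiplying by Rend lands in the span for σ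
    have hmulspan : ∀ q ∈ Submodule.span ℤ (SpanSet V G k' (Set.range σ')),
        q * Rend V σ i ε ∈ Submodule.span ℤ (SpanSet V G (k' + 1) (Set.range σ)) := by
      intro q hq
      induction hq using Submodule.span_induction with
      | mem p hp =>
        obtain ⟨l, hl1, hl2, τ, hτnd, hτrange, S, hS, rfl⟩ := hp
        have hxσ' : x ∈ Set.range σ' := by rw [hrange]; exact hxr
        have hyσ' : y ∈ Set.range σ' := by rw [hrange]; exact hyr
        obtain ⟨hRe, hIτ⟩ :=
          rend_eq_of_range V G hσ hτnd.1 hxr hyr (hτrange hxσ') (hτrange hyσ') hxy ε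
        apply Submodule.subset_span
        refine ⟨l, hl1, by omega, τ, hτnd, ?_, (i, ε) ::ₘ S, ⟨?_, ?_⟩, ?_⟩
        · rw [← hrange]; exact hτrange
        · rw [Multiset.card_cons, hS.1]; omega
        · intro p hp'
          rcases Multiset.mem_cons.mp hp' with rfl | hmem
          · exact hIτ
          · exact hS.2 p hmem
        · rw [hRe, Rprod, Rprod, Multiset.map_cons, Multiset.prod_cons]
          ring
      | zero =>
        rw [zero_mul]; exact Submodule.zero_mem _
      | add a b ha hb iha ihb =>
        rw [add_mul]; exact Submodule.add_mem _ iha ihb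
      | smul r a ha iha =>
        rw [smul_mul_assoc]; exact Submodule.smul_mem _ _ iha
    -- each extra term is handled by recursion or lands in the ideal
    have hwspan : ∀ w ∈ Filt.erase v, ∃ βw ∈ Ione V G,
        Cmon V σ' * X w - βw ∈ Submodule.span ℤ (SpanSet V G (k' + 1) (Set.range σ)) := by
      intro w hwF
      have hwv : w ≠ v := (Finset.mem_erase.mp hwF).1
      have hwval : w i = (if ε then σ (Fin.last (k' + 1)) else σ 0) i := by
        have := (Finset.mem_erase.mp hwF).2
        rw [hFilt, Finset.mem_filter] at this
        exact this.2
      by_cases hfs : FormsSimplex V G (w :: List.ofFn σ')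
      · have hlen : (w :: List.ofFn σ').length = (k' + 1) + 1 := by simp
        obtain ⟨σ'', hσ''chain, hperm⟩ := exists_chain_of_formsSimplex V G hfs hlen
        have hC'' : Cmon V σ'' = Cmon V σ' * X w := by
          rw [cmon_eq_list, (hperm.map X).prod_eq, List.map_cons, List.prod_cons,
            ← cmon_eq_list]
          ring
        have hmem'' : ∀ z, z ∈ Set.range σ'' ↔ z = w ∨ z ∈ Set.range σ' := by
          intro z
          rw [Set.mem_range, Set.mem_range, ← List.mem_ofFn, hperm.mem_iff, List.mem_cons, List.mem_ofFn]
        have hrangeσ'' : Set.range σ ⊆ Set.range σ'' := by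
          intro z hz
          rw [hmem'' z]
          right
          rw [hrange]
          exact hz
        have hdist'' : ∃ j j', σ'' j ≠ σ'' j' := dist_of_range V hrangeσ'' hdist
        have himg'' : Finset.image σ'' Finset.univ = insert w (Finset.image σ Finset.univ) := by
          apply Finset.coe_injective
          simp only [Finset.coe_image, Finset.coe_univ, Set.image_univ, Finset.coe_insert]
          ext z
          rw [hmem'' z, Set.mem_insert_iff, hrange]
        have hφ'' : ∑ r, lowerCount V (σ'' r) = lowerCount V w + ∑ r, lowerCount V (σ' r) := by
          have h1 := (hperm.map (lowerCount V)).sum_eq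
          rw [sum_ofFn_map, List.map_cons, List.sum_cons, sum_ofFn_map] at h1
          exact h1
        have hφσ : ∑ r, lowerCount V (σ r) = lowerCount V v + ∑ r, lowerCount V (σ' r) :=
          Fin.sum_univ_succAbove (fun r => lowerCount V (σ r)) t.succ
        by_cases hwim : w ∈ Finset.image σ Finset.univ
        · -- same support : use the inner induction (the measure strictly increases)
          have hvw : v < w := hkey w hwval hwv hwim
          have hfvw : lowerCount V v < lowerCount V w := lowerCount_lt V hvw
          have hcard'' : (Finset.image σ'' Finset.univ).card
              = (Finset.image σ Finset.univ).card := by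
            rw [himg'', Finset.insert_eq_self.mpr hwim]
          have hφle'' : ∑ r, lowerCount V (σ'' r) ≤ (k' + 1 + 1) * Fintype.card (GV V) := by
            calc ∑ r, lowerCount V (σ'' r) ≤ ∑ _r : Fin (k' + 1 + 1), Fintype.card (GV V) :=
                  Finset.sum_le_sum (fun r _ => lowerCount_le V (σ'' r))
              _ = (k' + 1 + 1) * Fintype.card (GV V) := by
                  rw [Finset.sum_const, Finset.card_univ, Fintype.card_fin, smul_eq_mul]
          have hφσlt : ∑ r, lowerCount V (σ r) < (k' + 1 + 1) * Fintype.card (GV V) := by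
            have hne0l : σ 0 ≠ σ (Fin.last (k' + 1)) := ne_endpoints V G hσ hdist
            have h2 : lowerCount V (σ 0) < Fintype.card (GV V) := by
              unfold lowerCount
              rw [← Finset.card_univ (α := GV V)]
              apply Finset.card_lt_card
              rw [Finset.ssubset_def]
              refine ⟨Finset.filter_subset _ _, fun hall => ?_⟩
              have hm := hall (Finset.mem_univ (σ (Fin.last (k' + 1))))
              exact hne0l (le_antisymm (hσ.1 (Fin.zero_le _)) (Finset.mem_filter.mp hm).2)
            calc ∑ r, lowerCount V (σ r)
                < ∑ _r : Fin (k' + 1 + 1), Fintype.card (GV V) := by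
                  apply Finset.sum_lt_sum (fun r _ => lowerCount_le V (σ r))
                  exact ⟨0, Finset.mem_univ 0, h2⟩
              _ = (k' + 1 + 1) * Fintype.card (GV V) := by
                  rw [Finset.sum_const, Finset.card_univ, Fintype.card_fin, smul_eq_mul]
          obtain ⟨β'', hβ''I, hβ''sp⟩ :=
            IHc ((k' + 1 + 1) * Fintype.card (GV V) - ∑ r, lowerCount V (σ'' r)) (by omega)
              (k' + 1) σ'' hσ''chain hdist'' (by rw [hcard'']; omega) le_rfl
          refine ⟨β'', hβ''I, ?_⟩
          rw [← hC'']
          exact Submodule.span_mono (spanSet_mono V G _ hrangeσ'') hβ''sp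
        · -- larger support : use the outer induction
          have hcard'' : (Finset.image σ'' Finset.univ).card
              = (Finset.image σ Finset.univ).card + 1 := by
            rw [himg'', Finset.card_insert_of_notMem hwim]
          obtain ⟨β'', hβ''I, hβ''sp⟩ :=
            IHe ((k' + 1 + 1) * Fintype.card (GV V) - ∑ r, lowerCount V (σ'' r))
              (k' + 1) σ'' hσ''chain hdist'' (by rw [hcard'']; omega) le_rfl
          refine ⟨β'', hβ''I, ?_⟩
          rw [← hC'']
          exact Submodule.span_mono (spanSet_mono V G _ hrangeσ'') hβ''sp
      · -- not a simplex : the term lies in the ideal I₁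
        refine ⟨Cmon V σ' * X w, ?_, by rw [sub_self]; exact Submodule.zero_mem _⟩
        apply Ideal.subset_span
        refine ⟨w :: List.ofFn σ', hfs, ?_⟩
        rw [List.map_cons, List.prod_cons, ← cmon_eq_list]
        ring
    choose βw hβwI hβwsp using hwspan
    refine ⟨β' * Rend V σ i ε - ∑ w ∈ (Filt.erase v).attach, βw w.1 w.2, ?_, ?_⟩
    · exact Submodule.sub_mem _ (Ideal.mul_mem_right _ _ hβ'I)
        (Ideal.sum_mem _ fun w _ => hβwI w.1 w.2)
    · have hfin : Cmon V σ - (β' * Rend V σ i ε - ∑ w ∈ (Filt.erase v).attach, βw w.1 w.2)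
          = (Cmon V σ' - β') * Rend V σ i ε
            - ∑ w ∈ (Filt.erase v).attach, (Cmon V σ' * X w.1 - βw w.1 w.2) := by
        rw [hstep1, Finset.sum_sub_distrib,
          Finset.sum_attach (Filt.erase v) (fun w => Cmon V σ' * X w)]
        ring
      rw [hfin]
      exact Submodule.sub_mem _ (hmulspan _ hβ'sp)
        (Submodule.sum_mem _ fun w _ => hβwsp w.1 w.2)

end Core

end ChowGS

/-- **Rewriting proposition** (Proposition 2.9): any simplex monomial `C_σ` with at
least two distinct vertices can be written, modulo the ideal `I_1`, as an integral
combination of products `C_τ · ∏_{(i,ε)∈S} R^ε_{τ,i}` over non-degenerate `l`-simplices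
`τ` (for `1 ≤ l ≤ k`) containing the vertices of `σ` and multisets `S ∈ 𝒜_τ(k−l)`. -/
theorem ChowGS.rewriting
    {d : ℕ} (hd : 1 ≤ d)
    (V : Fin d → Type) [∀ i, Fintype (V i)] [∀ i, LinearOrder (V i)]
    (G : ∀ i, SimpleGraph (V i)) (hconn : ∀ i, (G i).Connected)
    {k : ℕ} (σ : Fin (k + 1) → ChowGS.GV V)
    (hσ : ChowGS.IsSimplexChain V G σ)
    (hdist : ∃ j j' : Fin (k + 1), σ j ≠ σ j') :
    ∃ β ∈ ChowGS.Ione V G,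
      ChowGS.Cmon V σ - β ∈
        Submodule.span ℤ
          {p : MvPolynomial (ChowGS.GV V) ℤ | ∃ l : ℕ, 1 ≤ l ∧ l ≤ k ∧
            ∃ τ : Fin (l + 1) → ChowGS.GV V, ChowGS.IsNondegSimplex V G τ ∧
              Set.range σ ⊆ Set.range τ ∧
              ∃ S ∈ ChowGS.Atau V τ (k - l),
                p = ChowGS.Cmon V τ * ChowGS.Rprod V τ S} := by
  obtain ⟨β, hβ, hsp⟩ := ChowGS.rewriting_core V G (k + 1)
    ((k + 1) * Fintype.card (ChowGS.GV V) - ∑ r, ChowGS.lowerCount V (σ r)) k σ hσ hdist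
    (Nat.sub_le _ _) le_rfl
  exact ⟨β, hβ, hsp⟩
end

section
/- Let d ≥ 1 and let v_1 < v_2 < … < v_k be a chain in {0,1}^d, and let n_1,…,n_k ≥ 1 be integers with n_1+…+n_k = d+1. If there exists 1 ≤ i < k with n_1+…+n_i > |v_{i+1}|, or there exists 2 ≤ i ≤ k with n_i+…+n_k > d − |v_{i−1}|, then the monomial C_{v_1}^{n_1} C_{v_2}^{n_2} ⋯ C_{v_k}^{n_k} is zero in Chow(□^d). Here |v| denotes the number of coordinates of v equal to 1. -/
open MvPolynomial

namespace ChowCube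

/-- The vertices of the hypercube `□^ι = {0,1}^ι`. -/
abbrev Cube (ι : Type) : Type := ι → Fin 2

variable (ι : Type) [Fintype ι] [DecidableEq ι]

/-- The ideal `I_rat(□^ι)` of elements rationally equivalent to zero, generated by
(R1) products over lists of points which are not pairwise comparable,
(R2) `C_u · (Σ_v C_v)`, and (R3) `C_u C_w · (Σ_{v : v_i = u_i} C_v)` for `u_i ≠ w_i`. -/
noncomputable def Irat : Ideal (MvPolynomial (Cube ι) ℤ) :=
  Ideal.span
    ({ p | ∃ l : List (Cube ι),
        ¬ (l.Pairwise fun u v => u ≤ v ∨ v ≤ u) ∧ p = (l.map X).prod } ∪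
     { p | ∃ u : Cube ι, p = X u * ∑ v : Cube ι, X v } ∪
     { p | ∃ u w : Cube ι, ∃ i : ι, u i ≠ w i ∧
         p = X u * X w * ∑ v ∈ Finset.univ.filter (fun v : Cube ι => v i = u i), X v })

/-- The Chow ring of the hypercube, `Chow(□^ι) = Z(□^ι)/I_rat`. -/
abbrev Chow : Type := MvPolynomial (Cube ι) ℤ ⧸ Irat ι

noncomputable def mk : MvPolynomial (Cube ι) ℤ →ₐ[ℤ] Chow ι :=
  Ideal.Quotient.mkₐ ℤ (Irat ι)

/-- The degree `n` graded piece `Chow^n(□^ι)`. -/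
noncomputable def piece (n : ℕ) : Submodule ℤ (Chow ι) :=
  Submodule.map (mk ι).toLinearMap (homogeneousSubmodule (Cube ι) ℤ n)

/-- The number of coordinates equal to `1`. -/
def wt (u : Cube ι) : ℕ := (Finset.univ.filter fun i => u i = 1).card

/-- The `j`-th vertex of the standard maximal chain in `{0,1}^ι`: the indicator
function of the set of the `j` smallest indices. -/
def chainVtx [LinearOrder ι] (j : ℕ) : Cube ι :=
  fun i => if (Finset.univ.filter fun i' => i' < i).card < j then 1 else 0

/-- The monomial `C_{u_0}⋯C_{u_card ι}` of the standard maximal chain;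
its class generates the top graded piece, and the degree map `deg` is the isomorphism
`Chow^{card ι + 1}(□^ι) ≅ ℤ` sending this class to `1`. -/
noncomputable def genMono [LinearOrder ι] : MvPolynomial (Cube ι) ℤ :=
  ∏ j ∈ Finset.range (Fintype.card ι + 1), X (chainVtx ι j)

end ChowCube

namespace ChowCube

variable {ι : Type} [Fintype ι] [DecidableEq ι]

set_option linter.unusedSectionVars false

lemma wt_lt_wt {x u : Cube ι} (h : x < u) : wt ι x < wt ι u := by
  obtain ⟨hle, hne⟩ := lt_iff_le_and_ne.mp h
  apply Finset.card_lt_card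
  constructor
  · intro i hi
    simp only [Finset.mem_filter, Finset.mem_univ, true_and] at *
    have aux : ∀ a b : Fin 2, a ≤ b → a = 1 → b = 1 := by decide
    exact aux _ _ (hle i) hi
  · intro hsub
    apply hne; funext i
    have aux : ∀ a b : Fin 2, a ≤ b → (b = 1 → a = 1) → a = b := by decide
    refine aux _ _ (hle i) fun hb => ?_
    have := hsub (Finset.mem_filter.mpr ⟨Finset.mem_univ i, hb⟩)
    simpa using this

lemma lt_exists_coord {x u : Cube ι} (h : x < u) : ∃ i, x i = 0 ∧ u i = 1 := by
  obtain ⟨hle, hne⟩ := lt_iff_le_and_ne.mp h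
  obtain ⟨i, hi⟩ := Function.ne_iff.mp hne
  have aux : ∀ a b : Fin 2, a ≤ b → a ≠ b → a = 0 ∧ b = 1 := by decide
  exact ⟨i, aux _ _ (hle i) hi⟩

lemma exists_max : ∀ l : List (Cube ι), l ≠ [] →
    l.Pairwise (fun u v => u ≤ v ∨ v ≤ u) → ∃ w ∈ l, ∀ x ∈ l, x ≤ w := by
  intro l
  induction l with
  | nil => intro h; exact absurd rfl h
  | cons a t ih =>
    intro _ hp
    rcases List.pairwise_cons.mp hp with ⟨ha, ht⟩
    by_cases h0 : t = []
    · subst h0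
      exact ⟨a, List.mem_cons_self, by intro x hx; simp at hx; subst hx; exact le_rfl⟩
    · obtain ⟨w, hw, hmax⟩ := ih h0 ht
      rcases ha w hw with h1 | h1
      · refine ⟨w, List.mem_cons_of_mem _ hw, ?_⟩
        intro x hx
        rcases List.mem_cons.mp hx with rfl | hx
        · exact h1
        · exact hmax x hx
      · refine ⟨a, List.mem_cons_self, ?_⟩
        intro x hx
        rcases List.mem_cons.mp hx with rfl | hx
        · exact le_rfl
        · exact (hmax x hx).trans h1

lemma mem_Irat_R1 {l : List (Cube ι)} (h : ¬ l.Pairwise (fun u v => u ≤ v ∨ v ≤ u)) :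
    (l.map X).prod ∈ Irat ι :=
  Ideal.subset_span (Set.mem_union_left _ (Set.mem_union_left _ ⟨l, h, rfl⟩))

lemma key : ∀ (N : ℕ) (u : Cube ι) (l : List (Cube ι)),
    wt ι u + (l.map (wt ι)).sum ≤ N →
    (∀ x ∈ l, x < u) → wt ι u < l.length →
    (l.map X).prod * X u ∈ Irat ι := by
  intro N
  induction N with
  | zero =>
    intro u l hN hl hlen
    obtain ⟨x, hx⟩ := List.exists_mem_of_length_pos (Nat.lt_of_le_of_lt (Nat.zero_le _) hlen)
    have := wt_lt_wt (hl x hx)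
    omega
  | succ N ih =>
    intro u l hN hl hlen
    by_cases hch : l.Pairwise (fun a b : Cube ι => a ≤ b ∨ b ≤ a)
    case neg => exact Ideal.mul_mem_right _ _ (mem_Irat_R1 hch)
    have hlne : l ≠ [] := by intro h; subst h; simp at hlen
    obtain ⟨w, hwl, hmax⟩ := exists_max l hlne hch
    have hwu : w < u := hl w hwl
    have hwtwu : wt ι w < wt ι u := wt_lt_wt hwu
    obtain ⟨i, hwi, hui⟩ := lt_exists_coord hwu
    have hperm1 : l.Perm (w :: l.erase w) := List.perm_cons_erase hwl
    have hsum1 : (l.map (wt ι)).sum = wt ι w + ((l.erase w).map (wt ι)).sum := by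
      have := (hperm1.map (wt ι)).sum_eq
      simpa using this
    have hprod1 : (l.map X).prod = (X w : MvPolynomial (Cube ι) ℤ) * ((l.erase w).map X).prod := by
      have := (hperm1.map (X : Cube ι → MvPolynomial (Cube ι) ℤ)).prod_eq
      simpa using this
    have hlen1 : (l.erase w).length = l.length - 1 := List.length_erase_of_mem hwl
    by_cases hw2 : w ∈ l.erase w
    case neg =>
      -- multiplicity of w in l is 1
      have hel : ∀ x ∈ l.erase w, x < w := by
        intro x hx
        refine lt_of_le_of_ne (hmax x (List.erase_subset hx)) ?_
        rintro rfl; exact hw2 hx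
      have hlen2 : wt ι w < (l.erase w).length := by omega
      have hIH := ih w (l.erase w) (by omega) hel hlen2
      have heq : (l.map X).prod * X u = (((l.erase w).map X).prod * (X w : MvPolynomial (Cube ι) ℤ)) * X u := by
        rw [hprod1]; ring
      rw [heq]
      exact Ideal.mul_mem_right _ _ hIH
    case pos =>
      set l₂ := (l.erase w).erase w with hl₂def
      have hperm2 : (l.erase w).Perm (w :: l₂) := List.perm_cons_erase hw2
      have hsub2 : ∀ x ∈ l₂, x ∈ l := fun x hx =>
        List.erase_subset (List.erase_subset hx)
      set Q := ((l₂.map X).prod : MvPolynomial (Cube ι) ℤ) with hQdef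
      have hsum2 : ((l.erase w).map (wt ι)).sum = wt ι w + (l₂.map (wt ι)).sum := by
        have := (hperm2.map (wt ι)).sum_eq
        simpa using this
      have hlen3 : l₂.length = (l.erase w).length - 1 := List.length_erase_of_mem hw2
      have hQprod : (l.map X).prod = X w * (X w * Q) := by
        rw [hprod1]
        have := (hperm2.map (X : Cube ι → MvPolynomial (Cube ι) ℤ)).prod_eq
        simp only [List.map_cons, List.prod_cons] at this
        rw [this]
      have hwune : w i ≠ u i := by rw [hwi, hui]; decide
      have hgen : (X w * X u * ∑ v ∈ Finset.univ.filter (fun v : Cube ι => v i = w i), X v)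
          ∈ Irat ι :=
        Ideal.subset_span (Set.mem_union_right _ ⟨w, u, i, hwune, rfl⟩)
      set F := Finset.univ.filter (fun v : Cube ι => v i = w i) with hFdef
      have hwF : w ∈ F := by simp [hFdef]
      have hQG : Q * (X w * X u * ∑ v ∈ F, X v) ∈ Irat ι := Ideal.mul_mem_left _ _ hgen
      have hexp : Q * (X w * X u * ∑ v ∈ F, X v)
          = (l.map X).prod * X u + ∑ v ∈ F.erase w, (Q * (X w * X u) * X v) := by
        rw [← Finset.add_sum_erase F (fun v => X v) hwF, hQprod, mul_add, mul_add]
        congr 1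
        · ring
        · rw [Finset.mul_sum, Finset.mul_sum]
          exact Finset.sum_congr rfl fun v _ => by ring
      have hterm : ∀ v ∈ F.erase w, Q * (X w * X u) * X v ∈ Irat ι := by
        intro v hv
        obtain ⟨hvw, hvF⟩ := Finset.mem_erase.mp hv
        have hviF : v i = w i := by
          have := Finset.mem_filter.mp hvF
          exact this.2
        by_cases hpv : (u :: v :: w :: l₂).Pairwise (fun a b : Cube ι => a ≤ b ∨ b ≤ a)
        case neg =>
          have heq : Q * (X w * X u) * X v = (((u :: v :: w :: l₂)).map X).prod := by
            simp only [List.map_cons, List.prod_cons]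
            ring
          rw [heq]
          exact mem_Irat_R1 hpv
        case pos =>
          rcases List.pairwise_cons.mp hpv with ⟨hucomp, hpv2⟩
          rcases List.pairwise_cons.mp hpv2 with ⟨hvcomp, _⟩
          have hvu : v < u := by
            rcases hucomp v (by simp) with h | h
            · exfalso
              have := h i
              rw [hui, hviF, hwi] at this
              exact absurd this (by decide : ¬ ((1 : Fin 2) ≤ (0 : Fin 2)))
            · refine lt_of_le_of_ne h ?_
              rintro rfl
              rw [hviF, hwi] at hui
              exact absurd hui (by decide : ¬ ((0 : Fin 2) = 1))
          have hwtvu : wt ι v < wt ι u := wt_lt_wt hvu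
          rcases hvcomp w (by simp) with hvw2 | hvw2
          · -- v < w : exponent-reduction case
            have hvltw : v < w := lt_of_le_of_ne hvw2 hvw
            have hwtv : wt ι v < wt ι w := wt_lt_wt hvltw
            have hIH := ih u (v :: w :: l₂) (by simp; omega) ?_ ?_
            · have heq : Q * (X w * X u) * X v = ((v :: w :: l₂).map X).prod * X u := by
                simp only [List.map_cons, List.prod_cons]; ring
              rw [heq]; exact hIH
            · intro x hx
              rcases List.mem_cons.mp hx with rfl | hx
              · exact hvu
              rcases List.mem_cons.mp hx with rfl | hx
              · exact hwu
              · exact hl x (hsub2 x hx)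
            · simp only [List.length_cons]
              omega
          · -- w < v : apply outer induction at v
            have hwltv : w < v := lt_of_le_of_ne hvw2 (Ne.symm hvw)
            have hIH := ih v (w :: l₂) (by simp; omega) ?_ ?_
            · have heq : Q * (X w * X u) * X v = (((w :: l₂).map X).prod * X v) * X u := by
                simp only [List.map_cons, List.prod_cons]; ring
              rw [heq]
              exact Ideal.mul_mem_right _ _ hIH
            · intro x hx
              rcases List.mem_cons.mp hx with rfl | hx
              · exact hwltv
              · exact lt_of_le_of_lt (hmax x (hsub2 x hx)) hwltv
            · simp only [List.length_cons]
              omega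
      have hfinal : (l.map X).prod * X u
          = Q * (X w * X u * ∑ v ∈ F, X v) - ∑ v ∈ F.erase w, (Q * (X w * X u) * X v) := by
        rw [hexp]; ring
      rw [hfinal]
      exact Ideal.sub_mem _ hQG (Ideal.sum_mem _ hterm)
/-- The flip `v ↦ 1 - v` of the cube. -/
def flp (u : Cube ι) : Cube ι := fun i => 1 - u i

lemma flp_flp : Function.Involutive (flp (ι := ι)) := by
  intro u; funext i
  have aux : ∀ a : Fin 2, 1 - (1 - a) = a := by decide
  exact aux (u i)

lemma flp_le {u v : Cube ι} : flp u ≤ flp v ↔ v ≤ u := by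
  rw [Pi.le_def, Pi.le_def]
  refine forall_congr' fun i => ?_
  have aux : ∀ a b : Fin 2, (1 - a ≤ 1 - b ↔ b ≤ a) := by decide
  exact aux _ _

lemma flp_lt {u v : Cube ι} (h : u < v) : flp v < flp u := by
  refine lt_of_le_of_ne (flp_le.mpr h.le) ?_
  intro he
  exact absurd (flp_flp.injective he).symm h.ne

lemma wt_flp (u : Cube ι) : wt ι (flp u) = Fintype.card ι - wt ι u := by
  have h1 : (Finset.univ.filter fun i => flp u i = 1)
      = (Finset.univ.filter fun i => ¬ u i = 1) := by
    apply Finset.filter_congr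
    intro i _
    have aux : ∀ a : Fin 2, (1 - a = 1) ↔ ¬ (a = 1) := by decide
    exact aux (u i)
  have h2 := Finset.card_filter_add_card_filter_not
    (s := (Finset.univ : Finset ι)) (fun i => u i = 1)
  rw [Finset.card_univ] at h2
  unfold wt
  rw [h1]
  omega

lemma rename_flp_mem {p : MvPolynomial (Cube ι) ℤ} (hp : p ∈ Irat ι) :
    rename (flp (ι := ι)) p ∈ Irat ι := by
  have hmap : Ideal.map ((rename (flp (ι := ι)) : MvPolynomial (Cube ι) ℤ →ₐ[ℤ] MvPolynomial (Cube ι) ℤ) : MvPolynomial (Cube ι) ℤ →+* MvPolynomial (Cube ι) ℤ)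
      (Irat ι) ≤ Irat ι := by
    rw [Irat, Ideal.map_span]
    refine Ideal.span_le.mpr ?_
    rintro q ⟨p, hp, rfl⟩
    rcases hp with (⟨l, hl, rfl⟩ | ⟨u, rfl⟩) | ⟨u, w, i, hi, rfl⟩
    · -- R1
      refine Ideal.subset_span (Set.mem_union_left _ (Set.mem_union_left _
        ⟨l.map flp, ?_, ?_⟩))
      · intro hpw
        apply hl
        rw [List.pairwise_map] at hpw
        refine hpw.imp ?_
        rintro a b (h | h)
        · exact Or.inr (flp_le.mp h)
        · exact Or.inl (flp_le.mp h)
      · show _ = ((l.map flp).map X).prod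
        rw [map_list_prod]
        simp [List.map_map, Function.comp_def]
    · -- R2
      refine Ideal.subset_span (Set.mem_union_left _ (Set.mem_union_right _
        ⟨flp u, ?_⟩))
      rw [map_mul, map_sum]
      simp only [RingHom.coe_coe, rename_X]
      congr 1
      exact Equiv.sum_comp (Function.Involutive.toPerm _ flp_flp)
        (fun v => (X v : MvPolynomial (Cube ι) ℤ))
    · -- R3
      refine Ideal.subset_span (Set.mem_union_right _
        ⟨flp u, flp w, i, ?_, ?_⟩)
      · intro h
        apply hi
        have aux : ∀ a b : Fin 2, 1 - a = 1 - b → a = b := by decide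
        exact aux _ _ h
      · rw [map_mul, map_mul, map_sum]
        simp only [RingHom.coe_coe, rename_X]
        congr 1
        rw [Finset.sum_filter, Finset.sum_filter]
        rw [← Equiv.sum_comp (Function.Involutive.toPerm _ flp_flp)
          (fun v => if v i = flp u i then (X v : MvPolynomial (Cube ι) ℤ) else 0)]
        refine Finset.sum_congr rfl fun v _ => ?_
        have aux : ∀ a b : Fin 2, (1 - a = 1 - b) ↔ (a = b) := by decide
        simp only [Function.Involutive.toPerm, Equiv.coe_fn_mk]
        refine if_congr ?_ rfl rfl
        exact Iff.symm (aux (v i) (u i))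
  exact hmap (Ideal.mem_map_of_mem _ hp)

lemma key' (u : Cube ι) (l : List (Cube ι)) (hl : ∀ x ∈ l, u < x)
    (hlen : Fintype.card ι - wt ι u < l.length) :
    (l.map X).prod * X u ∈ Irat ι := by
  have h1 := key (wt ι (flp u) + ((l.map flp).map (wt ι)).sum) (flp u) (l.map flp)
    le_rfl ?_ ?_
  · have h2 := rename_flp_mem h1
    have heq : rename (flp (ι := ι)) (((l.map flp).map X).prod * (X (flp u) : MvPolynomial (Cube ι) ℤ))
        = (l.map X).prod * X u := by
      rw [map_mul, rename_X, flp_flp u, map_list_prod]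
      simp [List.map_map, Function.comp_def, flp_flp _]
    rwa [heq] at h2
  · intro x hx
    rw [List.mem_map] at hx
    obtain ⟨y, hy, rfl⟩ := hx
    exact flp_lt (hl y hy)
  · rw [List.length_map, wt_flp]
    exact hlen
lemma exists_list {α : Type} [DecidableEq α] (s : Finset α) (f : α → Cube ι) (m : α → ℕ) :
    ∃ l : List (Cube ι), (∀ x ∈ l, ∃ j ∈ s, x = f j) ∧ l.length = ∑ j ∈ s, m j ∧
      (l.map X).prod = ∏ j ∈ s, (X (f j) : MvPolynomial (Cube ι) ℤ) ^ m j := by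
  induction s using Finset.induction_on with
  | empty => exact ⟨[], by simp, by simp, by simp⟩
  | @insert a s ha ih =>
    obtain ⟨l, h1, h2, h3⟩ := ih
    refine ⟨List.replicate (m a) (f a) ++ l, ?_, ?_, ?_⟩
    · intro x hx
      rcases List.mem_append.mp hx with hx | hx
      · exact ⟨a, Finset.mem_insert_self _ _, List.eq_of_mem_replicate hx⟩
      · obtain ⟨j, hj, rfl⟩ := h1 x hx
        exact ⟨j, Finset.mem_insert_of_mem hj, rfl⟩
    · simp [h2, Finset.sum_insert ha]
    · simp [List.prod_append, h3, Finset.prod_insert ha]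


end ChowCube

/-- **Vanishing criterion** (Theorem 1.4 (1)): for a chain `v_1 < … < v_k` in `{0,1}^d`
and exponents `n_i ≥ 1` with `Σ n_i = d+1`, if `n_1+…+n_i > |v_{i+1}|` for some `i < k`,
or `n_i+…+n_k > d − |v_{i−1}|` for some `i ≥ 2`, then `C_{v_1}^{n_1}⋯C_{v_k}^{n_k} = 0`
in `Chow(□^d)`. -/
theorem ChowCube.monomial_vanishing
    (d : ℕ) (hd : 1 ≤ d) (k : ℕ)
    (v : Fin k → ChowCube.Cube (Fin d)) (hv : StrictMono v)
    (n : Fin k → ℕ) (hn : ∀ i, 1 ≤ n i) (hsum : ∑ i, n i = d + 1)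
    (hvanish :
      (∃ i i' : Fin k, (i : ℕ) + 1 = (i' : ℕ) ∧
        ChowCube.wt (Fin d) (v i') < ∑ j ∈ Finset.univ.filter (fun j => j ≤ i), n j) ∨
      (∃ i i' : Fin k, (i' : ℕ) + 1 = (i : ℕ) ∧
        d - ChowCube.wt (Fin d) (v i') < ∑ j ∈ Finset.univ.filter (fun j => i ≤ j), n j)) :
    ChowCube.mk (Fin d) (∏ i, MvPolynomial.X (v i) ^ n i) = 0 := by
  suffices h : (∏ i, MvPolynomial.X (v i) ^ n i : MvPolynomial (ChowCube.Cube (Fin d)) ℤ)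
      ∈ ChowCube.Irat (Fin d) by
    rw [ChowCube.mk, Ideal.Quotient.mkₐ_eq_mk]
    exact Ideal.Quotient.eq_zero_iff_mem.mpr h
  rcases hvanish with ⟨i, i', hii', hlt⟩ | ⟨i, i', hii', hlt⟩
  · -- first condition
    set s := Finset.univ.filter (fun j : Fin k => j ≤ i) with hs
    obtain ⟨l, hmem, hlenl, hprodl⟩ := ChowCube.exists_list s v n
    have hkey := ChowCube.key (ChowCube.wt (Fin d) (v i') + (l.map (ChowCube.wt (Fin d))).sum)
      (v i') l le_rfl ?_ ?_
    rotate_left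
    · intro x hx
      obtain ⟨j, hj, rfl⟩ := hmem x hx
      apply hv
      have hji : j ≤ i := (Finset.mem_filter.mp hj).2
      rw [Fin.lt_def]
      have := Fin.le_def.mp hji
      omega
    · rw [hlenl]; exact hlt
    rw [hprodl] at hkey
    -- split full product
    have hi'mem : i' ∈ Finset.univ.filter (fun j : Fin k => ¬ j ≤ i) := by
      simp only [Finset.mem_filter, Finset.mem_univ, true_and]
      rw [Fin.le_def]; omega
    obtain ⟨m, hm⟩ : ∃ m, n i' = m + 1 := ⟨n i' - 1, by have := hn i'; omega⟩
    have heq : (∏ j, MvPolynomial.X (v j) ^ n j : MvPolynomial (ChowCube.Cube (Fin d)) ℤ)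
        = ((∏ j ∈ s, MvPolynomial.X (v j) ^ n j) * MvPolynomial.X (v i'))
          * (MvPolynomial.X (v i') ^ m *
            ∏ j ∈ (Finset.univ.filter (fun j : Fin k => ¬ j ≤ i)).erase i',
              MvPolynomial.X (v j) ^ n j) := by
      rw [← Finset.prod_filter_mul_prod_filter_not Finset.univ (fun j : Fin k => j ≤ i)]
      rw [← Finset.mul_prod_erase _ _ hi'mem, hm, pow_succ]
      rw [hs]
      ring
    rw [heq]
    exact Ideal.mul_mem_right _ _ hkey
  · -- second condition
    set s := Finset.univ.filter (fun j : Fin k => i ≤ j) with hs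
    obtain ⟨l, hmem, hlenl, hprodl⟩ := ChowCube.exists_list s v n
    have hkey := ChowCube.key' (v i') l ?_ ?_
    rotate_left
    · intro x hx
      obtain ⟨j, hj, rfl⟩ := hmem x hx
      apply hv
      have hji : i ≤ j := (Finset.mem_filter.mp hj).2
      rw [Fin.lt_def]
      have := Fin.le_def.mp hji
      omega
    · rw [hlenl, Fintype.card_fin]; exact hlt
    rw [hprodl] at hkey
    have hi'mem : i' ∈ Finset.univ.filter (fun j : Fin k => ¬ i ≤ j) := by
      simp only [Finset.mem_filter, Finset.mem_univ, true_and]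
      rw [Fin.le_def]; omega
    obtain ⟨m, hm⟩ : ∃ m, n i' = m + 1 := ⟨n i' - 1, by have := hn i'; omega⟩
    have heq : (∏ j, MvPolynomial.X (v j) ^ n j : MvPolynomial (ChowCube.Cube (Fin d)) ℤ)
        = ((∏ j ∈ s, MvPolynomial.X (v j) ^ n j) * MvPolynomial.X (v i'))
          * (MvPolynomial.X (v i') ^ m *
            ∏ j ∈ (Finset.univ.filter (fun j : Fin k => ¬ i ≤ j)).erase i',
              MvPolynomial.X (v j) ^ n j) := by
      rw [← Finset.prod_filter_mul_prod_filter_not Finset.univ (fun j : Fin k => i ≤ j)]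
      rw [← Finset.mul_prod_erase _ _ hi'mem, hm, pow_succ]
      rw [hs]
      ring
    rw [heq]
    exact Ideal.mul_mem_right _ _ hkey
end

section
/- Let d ≥ 1. In the Chow ring of the hypercube, deg(C_𝟏^{d+1}) = deg(C_𝟎^{d+1}) = (−1)^d, where 𝟏 = (1,…,1) and 𝟎 = (0,…,0) in {0,1}^d. -/
open MvPolynomial

namespace ChowCube

section Proof

open Finset

variable {ι : Type} [Fintype ι] [DecidableEq ι]

/-! ### Membership of the generators -/

lemma R1_mem {u w : Cube ι} (h : ¬ (u ≤ w ∨ w ≤ u)) :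
    (X u : MvPolynomial (Cube ι) ℤ) * X w ∈ Irat ι := by
  apply Ideal.subset_span
  refine Or.inl (Or.inl ⟨[u, w], ?_, by simp⟩)
  intro hp
  exact h ((List.pairwise_cons.mp hp).1 w (by simp))

lemma R2_mem (u : Cube ι) :
    (X u : MvPolynomial (Cube ι) ℤ) * ∑ v : Cube ι, X v ∈ Irat ι :=
  Ideal.subset_span (Or.inl (Or.inr ⟨u, rfl⟩))

lemma R3_mem (u w : Cube ι) (i : ι) (h : u i ≠ w i) :
    (X u : MvPolynomial (Cube ι) ℤ) * X w *
      ∑ v ∈ Finset.univ.filter (fun v : Cube ι => v i = u i), X v ∈ Irat ι :=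
  Ideal.subset_span (Or.inr ⟨u, w, i, h, rfl⟩)

/-! ### Order and weight facts -/

lemma fin2_cases : ∀ x : Fin 2, x = 0 ∨ x = 1 := by decide

lemma not_one_le_zero : ¬ ((1 : Fin 2) ≤ 0) := by decide

lemma one_ne_zero2 : (1 : Fin 2) ≠ 0 := by decide

lemma le_vone (v : Cube ι) : v ≤ (fun _ => 1 : Cube ι) := by
  intro i
  show v i ≤ 1
  rcases fin2_cases (v i) with h | h <;> rw [h] <;> decide

lemma wt_le_wt {u v : Cube ι} (h : u ≤ v) : wt ι u ≤ wt ι v := by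
  apply Finset.card_le_card
  intro i hi
  simp only [Finset.mem_filter, Finset.mem_univ, true_and] at hi ⊢
  have h1 := h i
  rw [hi] at h1
  rcases fin2_cases (v i) with h2 | h2
  · rw [h2] at h1; exact absurd h1 not_one_le_zero
  · exact h2

lemma eq_of_le_of_wt_le {u v : Cube ι} (h : u ≤ v) (hw : wt ι v ≤ wt ι u) : u = v := by
  have hsub : (Finset.univ.filter fun i => u i = 1) ⊆ (Finset.univ.filter fun i => v i = 1) := by
    intro i hi
    simp only [Finset.mem_filter, Finset.mem_univ, true_and] at hi ⊢
    have h1 := h i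
    rw [hi] at h1
    rcases fin2_cases (v i) with h2 | h2
    · rw [h2] at h1; exact absurd h1 not_one_le_zero
    · exact h2
  have heq := Finset.eq_of_subset_of_card_le hsub hw
  funext i
  rcases fin2_cases (u i) with hu | hu
  · rcases fin2_cases (v i) with hv | hv
    · rw [hu, hv]
    · exfalso
      have : i ∈ Finset.univ.filter fun i => u i = 1 := by
        rw [heq]; simp [hv]
      simp only [Finset.mem_filter, Finset.mem_univ, true_and] at this
      rw [hu] at this
      exact absurd this.symm one_ne_zero2
  · have : i ∈ Finset.univ.filter fun i => v i = 1 := by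
      rw [← heq]; simp [hu]
    simp only [Finset.mem_filter, Finset.mem_univ, true_and] at this
    rw [hu, this]

lemma wt_lt_of_lt {u v : Cube ι} (h : u ≤ v) (hne : u ≠ v) : wt ι u < wt ι v := by
  rcases lt_or_ge (wt ι u) (wt ι v) with h' | h'
  · exact h'
  · exact absurd (eq_of_le_of_wt_le h h') hne

lemma wt_lt_of_ne_one {v : Cube ι} (h : v ≠ (fun _ => 1 : Cube ι)) :
    wt ι v < Fintype.card ι := by
  have h1 : wt ι (fun _ => 1 : Cube ι) = Fintype.card ι := by
    unfold wt
    rw [Finset.filter_true_of_mem (fun _ _ => rfl), Finset.card_univ]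
  calc wt ι v < wt ι (fun _ => 1 : Cube ι) := wt_lt_of_lt (le_vone v) h
    _ = Fintype.card ι := h1

lemma wt_pos {v : Cube ι} (h : v ≠ (fun _ => 0 : Cube ι)) : 1 ≤ wt ι v := by
  have : ∃ i, v i = 1 := by
    by_contra hc
    push_neg at hc
    apply h
    funext i
    rcases fin2_cases (v i) with h0 | h1
    · exact h0
    · exact absurd h1 (hc i)
  obtain ⟨i, hi⟩ := this
  have : 0 < (Finset.univ.filter fun i => v i = 1).card :=
    Finset.card_pos.mpr ⟨i, by simp [hi]⟩
  unfold wt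
  omega

/-! ### The standard chain in `Fin d → Fin 2` -/

variable {d : ℕ}

/-- top vertex -/
def vone (d : ℕ) : Cube (Fin d) := fun _ => 1

/-- bottom vertex -/
def vzero (d : ℕ) : Cube (Fin d) := fun _ => 0

/-- abbreviation for the chain vertices -/
def uu (d j : ℕ) : Cube (Fin d) := chainVtx (Fin d) j

lemma card_filter_lt (i : Fin d) :
    (Finset.univ.filter fun i' : Fin d => i' < i).card = (i : ℕ) := by
  rw [← Finset.card_image_of_injective _ Fin.val_injective]
  have himg : (Finset.univ.filter fun i' : Fin d => i' < i).image Fin.val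
      = Finset.range (i : ℕ) := by
    ext n
    simp only [Finset.mem_image, Finset.mem_filter, Finset.mem_univ, true_and,
      Finset.mem_range]
    constructor
    · rintro ⟨j, hj, rfl⟩; exact hj
    · intro hn
      exact ⟨⟨n, lt_trans hn i.isLt⟩, hn, rfl⟩
  rw [himg, Finset.card_range]

lemma uu_apply (j : ℕ) (i : Fin d) :
    uu d j i = if (i : ℕ) < j then 1 else 0 := by
  unfold uu chainVtx
  rw [card_filter_lt]

lemma uu_zero : uu d 0 = vzero d := by
  funext i; rw [uu_apply]; simp [vzero]

lemma uu_top : uu d d = vone d := by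
  funext i; rw [uu_apply, if_pos i.isLt]; rfl

lemma wt_uu (t : ℕ) (ht : t ≤ d) : wt (Fin d) (uu d t) = t := by
  unfold wt
  have hset : (Finset.univ.filter fun i : Fin d => uu d t i = 1)
      = Finset.univ.filter fun i : Fin d => (i : ℕ) < t := by
    ext i
    by_cases h : (i : ℕ) < t <;> simp [uu_apply, h]
  rw [hset, ← Finset.card_image_of_injective _ Fin.val_injective]
  have himg : (Finset.univ.filter fun i : Fin d => (i : ℕ) < t).image Fin.val
      = Finset.range t := by
    ext n
    simp only [Finset.mem_image, Finset.mem_filter, Finset.mem_univ, true_and,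
      Finset.mem_range]
    constructor
    · rintro ⟨j, hj, rfl⟩; exact hj
    · intro hn
      exact ⟨⟨n, lt_of_lt_of_le hn ht⟩, hn, rfl⟩
  rw [himg, Finset.card_range]

/-! ### The killing lemma -/

lemma kill (d c : ℕ) (hd : 1 ≤ d) (P : MvPolynomial (Cube (Fin d)) ℤ) :
    ∀ e : ℕ, ∀ S : Finset (Cube (Fin d)), S.Nonempty →
      (∀ x ∈ S, ∀ y ∈ S, x ≤ y ∨ y ≤ x) →
      (∀ x ∈ S, x ≠ vone d ∧ c ≤ wt (Fin d) x) →
      d + 2 ≤ c + (e + 1) + S.card →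
      (X (vone d) : MvPolynomial (Cube (Fin d)) ℤ) ^ (e + 1) * (∏ x ∈ S, X x) * P
        ∈ Irat (Fin d) := by
  intro e
  induction e with
  | zero =>
    intro S hne hchain hcond hcount
    exfalso
    have hinj : Set.InjOn (wt (Fin d)) ↑S := by
      intro x hx y hy hxy
      rcases hchain x hx y hy with h | h
      · exact eq_of_le_of_wt_le h hxy.ge
      · exact (eq_of_le_of_wt_le h hxy.le).symm
    have himg : S.image (wt (Fin d)) ⊆ Finset.Icc c (d - 1) := by
      intro n hn
      simp only [Finset.mem_image] at hn
      obtain ⟨x, hx, rfl⟩ := hn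
      have h1 := (hcond x hx).2
      have h2 : wt (Fin d) x < d := by
        have := wt_lt_of_ne_one (ι := Fin d) (hcond x hx).1
        simpa using this
      simp only [Finset.mem_Icc]
      omega
    have hcard := Finset.card_le_card himg
    rw [Finset.card_image_of_injOn hinj, Nat.card_Icc] at hcard
    have hpos : 0 < S.card := hne.card_pos
    omega
  | succ e ih =>
    intro S hne hchain hcond hcount
    obtain ⟨m, hmS, hmax⟩ := S.exists_max_image (wt (Fin d)) hne
    have hm1 : m ≠ vone d := (hcond m hmS).1
    have hex : ∃ i, m i = 0 := by
      by_contra hcon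
      push_neg at hcon
      apply hm1
      funext i
      rcases fin2_cases (m i) with h | h
      · exact absurd h (hcon i)
      · exact h
    obtain ⟨i, hi⟩ := hex
    have hle_m : ∀ x ∈ S, x ≤ m := by
      intro x hx
      rcases hchain x hx m hmS with h | h
      · exact h
      · exact (eq_of_le_of_wt_le h (hmax x hx)).ge
    set M : MvPolynomial (Cube (Fin d)) ℤ :=
      X (vone d) ^ e * (∏ x ∈ S.erase m, X x) * P with hM
    have hne01 : vone d i ≠ m i := by
      rw [hi]; exact (by decide : (1 : Fin 2) ≠ 0)
    have hrel := R3_mem (ι := Fin d) (vone d) m i hne01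
    have hmem : M * ((X (vone d) : MvPolynomial (Cube (Fin d)) ℤ) * X m *
        ∑ v ∈ Finset.univ.filter (fun v : Cube (Fin d) => v i = vone d i), X v)
        ∈ Irat (Fin d) := Ideal.mul_mem_left _ M hrel
    set F := Finset.univ.filter (fun v : Cube (Fin d) => v i = vone d i) with hF
    have hexp : M * ((X (vone d) : MvPolynomial (Cube (Fin d)) ℤ) * X m * ∑ v ∈ F, X v)
        = ∑ v ∈ F, M * (X (vone d) * X m) * X v := by
      rw [show M * ((X (vone d) : MvPolynomial (Cube (Fin d)) ℤ) * X m * ∑ v ∈ F, X v)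
          = (M * (X (vone d) * X m)) * ∑ v ∈ F, X v from by ring, Finset.mul_sum]
    have h0 : ∑ v ∈ F, Ideal.Quotient.mk (Irat (Fin d)) (M * (X (vone d) * X m) * X v)
        = 0 := by
      rw [← map_sum, ← hexp]
      exact Ideal.Quotient.eq_zero_iff_mem.mpr hmem
    have hone_mem : vone d ∈ F := by simp [hF]
    have hzero : ∀ b ∈ F, b ≠ vone d →
        Ideal.Quotient.mk (Irat (Fin d)) (M * (X (vone d) * X m) * X b) = 0 := by
      intro b hbF hb1
      rw [Ideal.Quotient.eq_zero_iff_mem]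
      have hbi : b i = 1 := by
        rw [hF] at hbF
        simpa [vone] using (Finset.mem_filter.mp hbF).2
      by_cases hcmp : m ≤ b
      · have hbm : b ≠ m := by
          intro h
          rw [h, hi] at hbi
          exact absurd hbi.symm one_ne_zero2
        have hwm : wt (Fin d) m < wt (Fin d) b := wt_lt_of_lt hcmp (Ne.symm hbm)
        have hbS : b ∉ S := fun hb => absurd (hmax b hb) (by omega)
        have harr : M * ((X (vone d) : MvPolynomial (Cube (Fin d)) ℤ) * X m) * X b
            = X (vone d) ^ (e + 1) * (∏ x ∈ insert b S, X x) * P := by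
          rw [Finset.prod_insert hbS, ← Finset.mul_prod_erase S _ hmS, hM]
          ring
        rw [harr]
        apply ih (insert b S) ⟨b, Finset.mem_insert_self _ _⟩
        · intro x hx y hy
          rcases Finset.mem_insert.mp hx with rfl | hx'
          · rcases Finset.mem_insert.mp hy with rfl | hy'
            · exact Or.inl le_rfl
            · exact Or.inr ((hle_m y hy').trans hcmp)
          · rcases Finset.mem_insert.mp hy with rfl | hy'
            · exact Or.inl ((hle_m x hx').trans hcmp)
            · exact hchain x hx' y hy'
        · intro x hx
          rcases Finset.mem_insert.mp hx with rfl | hx'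
          · exact ⟨hb1, le_trans (hcond m hmS).2 (le_of_lt hwm)⟩
          · exact hcond x hx'
        · rw [Finset.card_insert_of_notMem hbS]
          omega
      · have hcmp2 : ¬ b ≤ m := by
          intro h
          have := h i
          rw [hbi, hi] at this
          exact absurd this not_one_le_zero
        have hpair := R1_mem (ι := Fin d) (u := m) (w := b) (by tauto)
        have harr : M * ((X (vone d) : MvPolynomial (Cube (Fin d)) ℤ) * X m) * X b
            = X m * X b * (M * X (vone d)) := by ring
        rw [harr]
        exact Ideal.mul_mem_right _ _ hpair
    have hsum := Finset.sum_eq_single_of_mem (vone d) hone_mem hzero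
    rw [hsum] at h0
    rw [Ideal.Quotient.eq_zero_iff_mem] at h0
    have harr : M * ((X (vone d) : MvPolynomial (Cube (Fin d)) ℤ) * X m) * X (vone d)
        = X (vone d) ^ (e + 1 + 1) * (∏ x ∈ S, X x) * P := by
      rw [← Finset.mul_prod_erase S _ hmS, hM]
      ring
    rw [← harr]
    exact h0

/-! ### The chain descent -/

lemma step0 (k : ℕ) :
    Ideal.Quotient.mk (Irat (Fin (k + 1)))
        ((X (vone (k + 1)) : MvPolynomial (Cube (Fin (k + 1))) ℤ) ^ (k + 2))
      = - Ideal.Quotient.mk (Irat (Fin (k + 1)))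
        (X (vone (k + 1)) ^ (k + 1) * X (uu (k + 1) 0)) := by
  set d := k + 1 with hd
  have hrel := R2_mem (ι := Fin d) (vone d)
  have hmem : (X (vone d) : MvPolynomial (Cube (Fin d)) ℤ) ^ k *
      (X (vone d) * ∑ v : Cube (Fin d), X v) ∈ Irat (Fin d) :=
    Ideal.mul_mem_left _ _ hrel
  have hexp : (X (vone d) : MvPolynomial (Cube (Fin d)) ℤ) ^ k *
      (X (vone d) * ∑ v : Cube (Fin d), X v)
      = ∑ v : Cube (Fin d), X (vone d) ^ (k + 1) * X v := by
    rw [show (X (vone d) : MvPolynomial (Cube (Fin d)) ℤ) ^ k *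
        (X (vone d) * ∑ v : Cube (Fin d), X v)
        = X (vone d) ^ (k + 1) * ∑ v : Cube (Fin d), X v from by ring, Finset.mul_sum]
  have h0 : ∑ v : Cube (Fin d),
      Ideal.Quotient.mk (Irat (Fin d)) (X (vone d) ^ (k + 1) * X v) = 0 := by
    rw [← map_sum, ← hexp]
    exact Ideal.Quotient.eq_zero_iff_mem.mpr hmem
  have hone_ne_zero : vone d ≠ vzero d := by
    intro h
    have h0 := congrFun h ⟨0, by omega⟩
    simp only [vone, vzero] at h0
    exact absurd h0 one_ne_zero2
  have hzero : ∀ v ∈ (Finset.univ : Finset (Cube (Fin d))),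
      v ∉ ({vone d, vzero d} : Finset (Cube (Fin d))) →
      Ideal.Quotient.mk (Irat (Fin d)) (X (vone d) ^ (k + 1) * X v) = 0 := by
    intro v _ hv
    simp only [Finset.mem_insert, Finset.mem_singleton, not_or] at hv
    rw [Ideal.Quotient.eq_zero_iff_mem]
    have harr : (X (vone d) : MvPolynomial (Cube (Fin d)) ℤ) ^ (k + 1) * X v
        = X (vone d) ^ (k + 1) * (∏ x ∈ ({v} : Finset (Cube (Fin d))), X x) * 1 := by
      rw [Finset.prod_singleton, mul_one]
    rw [harr]
    apply kill d 1 (by omega) 1 k {v} ⟨v, Finset.mem_singleton_self v⟩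
    · intro x hx y hy
      rw [Finset.mem_singleton] at hx hy
      subst hx; subst hy
      exact Or.inl le_rfl
    · intro x hx
      rw [Finset.mem_singleton] at hx
      subst hx
      exact ⟨hv.1, wt_pos (by exact hv.2)⟩
    · rw [Finset.card_singleton]
      omega
  have hsplit := Finset.sum_subset
    (Finset.subset_univ ({vone d, vzero d} : Finset (Cube (Fin d)))) hzero
  rw [Finset.sum_pair hone_ne_zero] at hsplit
  rw [← hsplit] at h0
  have e1 : (X (vone d) : MvPolynomial (Cube (Fin d)) ℤ) ^ (k + 1) * X (vone d)
      = X (vone d) ^ (k + 2) := by ring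
  have e2 : (X (vone d) : MvPolynomial (Cube (Fin d)) ℤ) ^ (k + 1) * X (vzero d)
      = X (vone d) ^ (k + 1) * X (uu d 0) := by rw [uu_zero]
  rw [e1, e2] at h0
  exact eq_neg_of_add_eq_zero_left h0

lemma stepS (d s k : ℕ) (hdk : d = s + 2 + k) :
    Ideal.Quotient.mk (Irat (Fin d))
        ((X (vone d) : MvPolynomial (Cube (Fin d)) ℤ) ^ (k + 2) *
          ∏ j ∈ Finset.range (s + 1), X (uu d j))
      = - Ideal.Quotient.mk (Irat (Fin d))
        (X (vone d) ^ (k + 1) * ∏ j ∈ Finset.range (s + 2), X (uu d j)) := by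
  have hsd : s < d := by omega
  set i : Fin d := ⟨s, hsd⟩ with hidef
  have hival : (i : ℕ) = s := by rw [hidef]
  have hus : uu d s i = 0 := by
    rw [uu_apply, hival, if_neg (lt_irrefl s)]
  have hne01 : vone d i ≠ uu d s i := by
    rw [hus]; exact (by decide : (1 : Fin 2) ≠ 0)
  have hrel := R3_mem (ι := Fin d) (vone d) (uu d s) i hne01
  set M : MvPolynomial (Cube (Fin d)) ℤ :=
    X (vone d) ^ k * ∏ j ∈ Finset.range s, X (uu d j) with hM
  have hmem : M * ((X (vone d) : MvPolynomial (Cube (Fin d)) ℤ) * X (uu d s) *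
      ∑ v ∈ Finset.univ.filter (fun v : Cube (Fin d) => v i = vone d i), X v)
      ∈ Irat (Fin d) := Ideal.mul_mem_left _ M hrel
  set F := Finset.univ.filter (fun v : Cube (Fin d) => v i = vone d i) with hF
  have hexp : M * ((X (vone d) : MvPolynomial (Cube (Fin d)) ℤ) * X (uu d s) *
      ∑ v ∈ F, X v) = ∑ v ∈ F, M * (X (vone d) * X (uu d s)) * X v := by
    rw [show M * ((X (vone d) : MvPolynomial (Cube (Fin d)) ℤ) * X (uu d s) *
        ∑ v ∈ F, X v)
        = (M * (X (vone d) * X (uu d s))) * ∑ v ∈ F, X v from by ring, Finset.mul_sum]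
  have h0 : ∑ v ∈ F,
      Ideal.Quotient.mk (Irat (Fin d)) (M * (X (vone d) * X (uu d s)) * X v) = 0 := by
    rw [← map_sum, ← hexp]
    exact Ideal.Quotient.eq_zero_iff_mem.mpr hmem
  have h1F : vone d ∈ F := by simp [hF]
  have h2F : uu d (s + 1) ∈ F := by
    simp only [hF, Finset.mem_filter, Finset.mem_univ, true_and]
    rw [uu_apply, hival, if_pos (by omega)]
    rfl
  have hone_ne : vone d ≠ uu d (s + 1) := by
    intro h
    set j : Fin d := ⟨s + 1, by omega⟩ with hjdef
    have hjval : (j : ℕ) = s + 1 := by rw [hjdef]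
    have h0 := congrFun h j
    rw [uu_apply, hjval, if_neg (lt_irrefl (s + 1))] at h0
    simp only [vone] at h0
    exact absurd h0 one_ne_zero2
  have hzero : ∀ v ∈ F, v ∉ ({vone d, uu d (s + 1)} : Finset (Cube (Fin d))) →
      Ideal.Quotient.mk (Irat (Fin d)) (M * (X (vone d) * X (uu d s)) * X v) = 0 := by
    intro v hvF hv
    simp only [Finset.mem_insert, Finset.mem_singleton, not_or] at hv
    obtain ⟨hv1, hv2⟩ := hv
    have hvi : v i = 1 := by
      rw [hF] at hvF
      simpa [vone] using (Finset.mem_filter.mp hvF).2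
    rw [Ideal.Quotient.eq_zero_iff_mem]
    by_cases hcmp : uu d s ≤ v
    · have hles : uu d (s + 1) ≤ v := by
        intro j
        rw [uu_apply]
        by_cases hj : (j : ℕ) < s + 1
        · rw [if_pos hj]
          by_cases hj2 : (j : ℕ) < s
          · have h3 := hcmp j
            rw [uu_apply, if_pos hj2] at h3
            exact h3
          · have hji : j = i := Fin.ext (by rw [hival]; omega)
            rw [hji, hvi]
        · rw [if_neg hj]
          exact Fin.zero_le _
      have hwv : s + 2 ≤ wt (Fin d) v := by
        have h1 : wt (Fin d) (uu d (s + 1)) = s + 1 := wt_uu _ (by omega)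
        have h2 := wt_lt_of_lt hles (Ne.symm hv2)
        omega
      have harr : M * ((X (vone d) : MvPolynomial (Cube (Fin d)) ℤ) * X (uu d s)) * X v
          = X (vone d) ^ (k + 1) * (∏ x ∈ ({v} : Finset (Cube (Fin d))), X x) *
            ∏ j ∈ Finset.range (s + 1), X (uu d j) := by
        rw [Finset.prod_singleton, Finset.prod_range_succ, hM]
        ring
      rw [harr]
      apply kill d (s + 2) (by omega) _ k {v} ⟨v, Finset.mem_singleton_self v⟩
      · intro x hx y hy
        rw [Finset.mem_singleton] at hx hy
        subst hx; subst hy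
        exact Or.inl le_rfl
      · intro x hx
        rw [Finset.mem_singleton] at hx
        subst hx
        exact ⟨hv1, hwv⟩
      · rw [Finset.card_singleton]
        omega
    · have hcmp2 : ¬ v ≤ uu d s := by
        intro h
        have := h i
        rw [hvi, hus] at this
        exact absurd this not_one_le_zero
      have hpair := R1_mem (ι := Fin d) (u := uu d s) (w := v) (by tauto)
      have harr : M * ((X (vone d) : MvPolynomial (Cube (Fin d)) ℤ) * X (uu d s)) * X v
          = X (uu d s) * X v * (M * X (vone d)) := by ring
      rw [harr]
      exact Ideal.mul_mem_right _ _ hpair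
  have hsub : ({vone d, uu d (s + 1)} : Finset (Cube (Fin d))) ⊆ F := by
    intro x hx
    rcases Finset.mem_insert.mp hx with rfl | hx'
    · exact h1F
    · rw [Finset.mem_singleton] at hx'
      subst hx'
      exact h2F
  have hsplit := Finset.sum_subset hsub hzero
  rw [Finset.sum_pair hone_ne] at hsplit
  rw [← hsplit] at h0
  have e1 : M * ((X (vone d) : MvPolynomial (Cube (Fin d)) ℤ) * X (uu d s)) * X (vone d)
      = X (vone d) ^ (k + 2) * ∏ j ∈ Finset.range (s + 1), X (uu d j) := by
    rw [Finset.prod_range_succ, hM]; ring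
  have e2 : M * ((X (vone d) : MvPolynomial (Cube (Fin d)) ℤ) * X (uu d s)) *
        X (uu d (s + 1))
      = X (vone d) ^ (k + 1) * ∏ j ∈ Finset.range (s + 2), X (uu d j) := by
    rw [Finset.prod_range_succ, Finset.prod_range_succ, hM]; ring
  rw [e1, e2] at h0
  exact eq_neg_of_add_eq_zero_left h0

lemma tele (d : ℕ) (hd : 1 ≤ d) :
    ∀ t, t ≤ d →
      Ideal.Quotient.mk (Irat (Fin d))
          ((X (vone d) : MvPolynomial (Cube (Fin d)) ℤ) ^ (d + 1))
        = (-1 : ℤ) ^ t • Ideal.Quotient.mk (Irat (Fin d))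
          (X (vone d) ^ (d + 1 - t) * ∏ j ∈ Finset.range t, X (uu d j)) := by
  intro t
  induction t with
  | zero => intro _; simp
  | succ t ih =>
    intro ht
    rw [ih (by omega)]
    rcases Nat.eq_zero_or_pos t with rfl | htpos
    · obtain ⟨k, rfl⟩ : ∃ k, d = k + 1 := ⟨d - 1, by omega⟩
      have h1 : k + 1 + 1 - 0 = k + 2 := by omega
      have h2 : k + 1 + 1 - 1 = k + 1 := by omega
      rw [h1, h2]
      rw [Finset.prod_range_one, Finset.prod_range_zero, mul_one]
      rw [step0 k]
      simp only [pow_zero, one_smul, zero_add, pow_one]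
      exact (neg_one_smul ℤ _).symm
    · obtain ⟨s, rfl⟩ : ∃ s, t = s + 1 := ⟨t - 1, by omega⟩
      obtain ⟨k, hk⟩ : ∃ k, d = s + 2 + k := ⟨d - s - 2, by omega⟩
      have h1 : d + 1 - (s + 1) = k + 2 := by omega
      have h2 : d + 1 - (s + 1 + 1) = k + 1 := by omega
      rw [h1, h2]
      rw [stepS d s k hk]
      rw [pow_succ (-1 : ℤ) (s + 1), mul_smul]
      congr 1
      exact (neg_one_smul ℤ _).symm

lemma part1 (d : ℕ) (hd : 1 ≤ d) :
    Ideal.Quotient.mk (Irat (Fin d))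
        ((X (vone d) : MvPolynomial (Cube (Fin d)) ℤ) ^ (d + 1))
      = (-1 : ℤ) ^ d • Ideal.Quotient.mk (Irat (Fin d)) (genMono (Fin d)) := by
  have h := tele d hd d le_rfl
  have harg : (X (vone d) : MvPolynomial (Cube (Fin d)) ℤ) ^ (d + 1 - d) *
      ∏ j ∈ Finset.range d, X (uu d j) = genMono (Fin d) := by
    have hdd : d + 1 - d = 1 := by omega
    rw [hdd, pow_one]
    unfold genMono
    rw [Fintype.card_fin]
    rw [Finset.prod_range_succ]
    have : chainVtx (Fin d) = uu d := rfl
    rw [this, uu_top]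
    ring
  rw [harg] at h
  exact h

/-! ### The flip symmetry -/

def fl : Fin 2 → Fin 2 := fun x => if x = 0 then 1 else 0

def G (d : ℕ) : Cube (Fin d) → Cube (Fin d) := fun v i => fl (v i.rev)

lemma fl_fl : ∀ x, fl (fl x) = x := by decide

lemma fl_le : ∀ x y : Fin 2, (fl y ≤ fl x ↔ x ≤ y) := by decide

lemma fl_inj : ∀ x y : Fin 2, fl x = fl y → x = y := by decide

lemma G_G (v : Cube (Fin d)) : G d (G d v) = v := by
  funext i
  simp [G, Fin.rev_rev, fl_fl]

lemma G_invol : Function.Involutive (G d) := G_G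

lemma G_le {a b : Cube (Fin d)} : G d a ≤ G d b ↔ b ≤ a := by
  constructor
  · intro h i
    have h1 := h i.rev
    simp only [G, Fin.rev_rev] at h1
    exact (fl_le _ _).mp h1
  · intro h i
    exact (fl_le _ _).mpr (h i.rev)

lemma rename_Irat {d : ℕ} {p : MvPolynomial (Cube (Fin d)) ℤ} (hp : p ∈ Irat (Fin d)) :
    rename (G d) p ∈ Irat (Fin d) := by
  have hle : Irat (Fin d) ≤ Ideal.comap (rename (G d)).toRingHom (Irat (Fin d)) := by
    unfold Irat
    apply Ideal.span_le.mpr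
    rintro q hq
    rcases hq with (⟨l, hl, rfl⟩ | ⟨u, rfl⟩) | ⟨u, w, i, hui, rfl⟩
    · show rename (G d) _ ∈ Irat (Fin d)
      rw [map_list_prod, List.map_map]
      have hcomp : (rename (G d) : MvPolynomial (Cube (Fin d)) ℤ →
            MvPolynomial (Cube (Fin d)) ℤ) ∘ X = X ∘ (G d) := by
        funext v; exact rename_X _ _
      rw [hcomp, ← List.map_map]
      apply Ideal.subset_span
      refine Or.inl (Or.inl ⟨l.map (G d), ?_, rfl⟩)
      rw [List.pairwise_map]
      intro hcon
      apply hl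
      refine hcon.imp ?_
      intro a b hab
      rcases hab with h | h
      · exact Or.inr (G_le.mp h)
      · exact Or.inl (G_le.mp h)
    · show rename (G d) _ ∈ Irat (Fin d)
      rw [map_mul, rename_X, map_sum]
      have hsum : ∑ v : Cube (Fin d), rename (G d) (X v)
          = ∑ v : Cube (Fin d), (X v : MvPolynomial (Cube (Fin d)) ℤ) := by
        simp_rw [rename_X]
        exact Fintype.sum_bijective (G d) (G_invol.bijective) _ _ (fun v => rfl)
      rw [hsum]
      exact R2_mem (G d u)
    · show rename (G d) _ ∈ Irat (Fin d)
      rw [map_mul, map_mul, rename_X, rename_X, map_sum]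
      have hGu : ∀ v : Cube (Fin d), (v i = u i) ↔
          (G d v) i.rev = (G d u) i.rev := by
        intro v
        simp only [G, Fin.rev_rev]
        constructor
        · intro h; rw [h]
        · intro h; exact fl_inj _ _ h
      have hsum : ∑ v ∈ Finset.univ.filter (fun v : Cube (Fin d) => v i = u i),
            rename (G d) (X v)
          = ∑ v ∈ Finset.univ.filter
              (fun v : Cube (Fin d) => v i.rev = (G d u) i.rev),
            (X v : MvPolynomial (Cube (Fin d)) ℤ) := by
        simp_rw [rename_X]
        rw [← Finset.sum_image (g := G d)
          (f := fun v => (X v : MvPolynomial (Cube (Fin d)) ℤ))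
          (by intro x _ y _ h; exact G_invol.injective h)]
        congr 1
        ext v'
        simp only [Finset.mem_image, Finset.mem_filter, Finset.mem_univ, true_and]
        constructor
        · rintro ⟨v, hv, rfl⟩
          exact (hGu v).mp hv
        · intro hv'
          refine ⟨G d v', ?_, G_G v'⟩
          rw [hGu (G d v'), G_G]
          exact hv'
      rw [hsum]
      apply R3_mem (G d u) (G d w) i.rev
      intro hcon
      simp only [G, Fin.rev_rev] at hcon
      exact hui (fl_inj _ _ hcon)
  exact hle hp

lemma G_vone : G d (vone d) = vzero d := by
  funext i; simp [G, vone, vzero, fl]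

lemma G_uu (j : ℕ) (hj : j ≤ d) : G d (uu d j) = uu d (d - j) := by
  funext i
  have hi := i.isLt
  have hrv : ((i.rev : Fin d) : ℕ) = d - 1 - (i : ℕ) := by
    rw [Fin.val_rev]; omega
  simp only [G, uu_apply, hrv]
  by_cases h : d - 1 - (i : ℕ) < j
  · rw [if_pos h, if_neg (by omega)]
    decide
  · rw [if_neg h, if_pos (by omega)]
    decide

lemma rename_genMono (d : ℕ) : rename (G d) (genMono (Fin d)) = genMono (Fin d) := by
  unfold genMono
  rw [map_prod]
  simp_rw [rename_X]
  rw [Fintype.card_fin]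
  have hcv : chainVtx (Fin d) = uu d := rfl
  rw [hcv]
  have h1 : ∀ j ∈ Finset.range (d + 1),
      (X (G d (uu d j)) : MvPolynomial (Cube (Fin d)) ℤ) = X (uu d (d + 1 - 1 - j)) := by
    intro j hj
    rw [Finset.mem_range] at hj
    have hnat : d + 1 - 1 - j = d - j := by omega
    rw [G_uu j (by omega), hnat]
  rw [Finset.prod_congr rfl h1]
  exact Finset.prod_range_reflect (fun j => (X (uu d j) : MvPolynomial (Cube (Fin d)) ℤ)) (d + 1)

lemma part2 (d : ℕ) (hd : 1 ≤ d) :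
    Ideal.Quotient.mk (Irat (Fin d))
        ((X (vzero d) : MvPolynomial (Cube (Fin d)) ℤ) ^ (d + 1))
      = (-1 : ℤ) ^ d • Ideal.Quotient.mk (Irat (Fin d)) (genMono (Fin d)) := by
  have h1 := part1 d hd
  rw [← map_zsmul (Ideal.Quotient.mk (Irat (Fin d))) ((-1 : ℤ) ^ d) (genMono (Fin d))] at h1
  rw [Ideal.Quotient.eq] at h1
  have h2 := rename_Irat (d := d) h1
  rw [map_sub, map_pow, rename_X, G_vone, map_zsmul, rename_genMono] at h2
  rw [← Ideal.Quotient.eq] at h2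
  rw [h2, map_zsmul]

end Proof

end ChowCube

/-- **Proposition 4.4**: `deg(C_𝟏^{d+1}) = deg(C_𝟎^{d+1}) = (−1)^d` in `Chow(□^d)`,
expressed against the generator of `Chow^{d+1}(□^d)` of degree `1`. -/
theorem ChowCube.deg_top_bot_pow
    (d : ℕ) (hd : 1 ≤ d) :
    ChowCube.mk (Fin d) (MvPolynomial.X (fun _ => (1 : Fin 2)) ^ (d + 1)) =
        ((-1 : ℤ) ^ d) • ChowCube.mk (Fin d) (ChowCube.genMono (Fin d)) ∧
      ChowCube.mk (Fin d) (MvPolynomial.X (fun _ => (0 : Fin 2)) ^ (d + 1)) =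
        ((-1 : ℤ) ^ d) • ChowCube.mk (Fin d) (ChowCube.genMono (Fin d)) := by
  constructor
  · have h := ChowCube.part1 d hd
    rw [show (fun _ => (1 : Fin 2)) = ChowCube.vone d from rfl]
    simpa [ChowCube.mk, Ideal.Quotient.mkₐ_eq_mk] using h
  · have h := ChowCube.part2 d hd
    rw [show (fun _ => (0 : Fin 2)) = ChowCube.vzero d from rfl]
    simpa [ChowCube.mk, Ideal.Quotient.mkₐ_eq_mk] using h
end
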